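/- arXiv:1508.04508 — 10 statements merged into one kernel-verified Lean document; each statement's English description precedes it below -/
import Mathlib

section
/- Let n ≥ 1, let F be the (2n+1)×(2n+1) matrix with F_{i,j} = 1 if i+j = 2n+2 and 0 otherwise, and define so(2n+1,ℂ) = {X ∈ M_{2n+1}(ℂ) : XᵀF + FX = 0}. Let Λ = Σ_{i=1}^{n} E_{i,i+1} − Σ_{i=n+1}^{2n} E_{i,i+1}. Then Λ ∈ so(2n+1,ℂ), and the centralizer {X ∈ so(2n+1,ℂ) : Λ·X = X·Λ} equals the ℂ-linear span of the odd powers Λ^{2k−1} for 1 ≤ k ≤ n; in particular it is n-dimensional. -/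
/-!
A matrix commuting with a nilpotent shift `Λ` whose superdiagonal weights are nonzero is
determined by its first row, so it is a polynomial `∑_{d ≤ 2n} a_d Λ^d` in `Λ`; the first rows of
the powers `Λ^d` are independent, so these coefficients are unique. As `Λ` is skew-adjoint for the
antidiagonal form `F`, `(Λ^d)ᵀ F = (-1)^d F Λ^d`, and since `F` is invertible, skew-adjointness of
`∑ a_d Λ^d` forces `2 a_d = 0` for every even `d`, leaving exactly the odd powers.
-/

open Matrix

section AdjointPowers

variable {n K : Type*} [Fintype n] [DecidableEq n]

theorem Matrix.IsAdjointPair.pow {R : Type*} [CommRing R] {J A A' : Matrix n n R}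
    (h : J.IsAdjointPair J A A') (d : ℕ) : J.IsAdjointPair J (A ^ d) (A' ^ d) := by
  induction d with
  | zero => simp [IsAdjointPair]
  | succ d ih =>
    unfold IsAdjointPair at h ih ⊢
    rw [pow_succ, transpose_mul, Matrix.mul_assoc, ih, ← Matrix.mul_assoc, h,
      Matrix.mul_assoc, ← pow_succ']

theorem Matrix.IsSkewAdjoint.pow_of_odd {R : Type*} [CommRing R] {J A : Matrix n n R}
    (h : J.IsSkewAdjoint A) {d : ℕ} (hd : Odd d) : J.IsSkewAdjoint (A ^ d) := by
  have := IsAdjointPair.pow h d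
  rwa [hd.neg_pow] at this

variable [Field K] [NeZero (2 : K)]

/-- If `X = ∑ aᵢ Aᵉⁱ` and `A` are both skew-adjoint for an invertible `J`, then
`∑ aᵢ ((-1)^eᵢ + 1) Aᵉⁱ = 0`, so linear independence kills the even part of `X`. -/
theorem Matrix.IsSkewAdjoint.coeff_eq_zero_of_even {ι : Type*} [Fintype ι] {J A : Matrix n n K}
    (hJ : IsUnit J) (hA : J.IsSkewAdjoint A) {e : ι → ℕ}
    (he : LinearIndependent K fun i => A ^ e i) {a : ι → K}
    (hX : J.IsSkewAdjoint (∑ i, a i • A ^ e i)) {i : ι} (hi : Even (e i)) : a i = 0 := by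
  have hpow (d : ℕ) : (A ^ d)ᵀ * J = J * ((-1 : K) ^ d • A ^ d) := by
    rw [← smul_pow, neg_one_smul]
    exact hA.pow d
  have hsum : J * ∑ i, (a i * ((-1) ^ e i + 1)) • A ^ e i = 0 := by
    have hX' : (∑ i, a i • A ^ e i)ᵀ * J + J * ∑ i, a i • A ^ e i = 0 := by
      rw [hX, Matrix.mul_neg, neg_add_cancel]
    rw [← hX', transpose_sum, Finset.sum_mul, Finset.mul_sum, Finset.mul_sum,
      ← Finset.sum_add_distrib]
    refine Finset.sum_congr rfl fun i _ => ?_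
    rw [transpose_smul, Matrix.smul_mul, hpow, Matrix.mul_smul, Matrix.mul_smul,
      Matrix.mul_smul, mul_add, mul_one, add_smul, mul_smul]
  have := Fintype.linearIndependent_iff.1 he _ (hJ.mul_right_eq_zero.1 hsum) i
  rw [hi.neg_one_pow, one_add_one_eq_two] at this
  exact (mul_eq_zero.1 this).resolve_right two_ne_zero

theorem Matrix.IsSkewAdjoint.span_odd_pow_le {R : Type*} [CommRing R] {J A : Matrix n n R}
    (hA : J.IsSkewAdjoint A) {ι : Type*} {e : ι → ℕ} (he : ∀ i, Odd (e i)) :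
    Submodule.span R (Set.range fun i => A ^ e i)
      ≤ skewAdjointMatricesSubmodule J ⊓ Subalgebra.toSubmodule (Subalgebra.centralizer R {A}) :=
  Submodule.span_le.2 <| Set.range_subset_iff.2 fun i =>
    ⟨(mem_skewAdjointMatricesSubmodule J _).2 (hA.pow_of_odd (he i)),
      (Subalgebra.mem_centralizer_iff R).2 fun _ h => h ▸ (pow_mul_comm' A (e i)).symm⟩

end AdjointPowers

section WeightedShift

variable {R : Type*}

def weightedShift [Zero R] (m : ℕ) (w : ℕ → R) : Matrix (Fin (m + 1)) (Fin (m + 1)) R :=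
  of fun i j => if (j : ℕ) = i + 1 then w i else 0

variable [CommSemiring R] {m : ℕ} (w : ℕ → R)

theorem weightedShift_mul_apply (X : Matrix (Fin (m + 1)) (Fin (m + 1)) R) (i j : Fin (m + 1)) :
    (weightedShift m w * X) i j = if h : (i : ℕ) + 1 < m + 1 then w i * X ⟨i + 1, h⟩ j else 0 := by
  rw [mul_apply]
  split_ifs with h
  · rw [Finset.sum_eq_single ⟨i + 1, h⟩ (fun k _ hk => by
      simp [weightedShift, Fin.ext_iff.not.1 hk]) (by simp)]
    simp [weightedShift]
  · exact Finset.sum_eq_zero fun k _ => by simp [weightedShift]; omega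

theorem weightedShift_pow_apply (d : ℕ) (i j : Fin (m + 1)) :
    (weightedShift m w ^ d) i j
      = if (j : ℕ) = i + d then ∏ t ∈ Finset.range d, w (i + t) else 0 := by
  induction d generalizing i with
  | zero => simp [one_apply, Fin.ext_iff, eq_comm]
  | succ d ih =>
    rw [pow_succ', weightedShift_mul_apply]
    split_ifs with h hj hj
    · rw [ih, if_pos (by simp; omega), Finset.prod_range_succ']
      simp [mul_comm, add_assoc, add_comm 1]
    · rw [ih, if_neg (by simp; omega), mul_zero]
    · omega
    · rfl

theorem sum_smul_weightedShift_pow_apply_zero (a : Fin (m + 1) → R) (j : Fin (m + 1)) :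
    (∑ d : Fin (m + 1), a d • weightedShift m w ^ (d : ℕ)) 0 j
      = a j * ∏ t ∈ Finset.range j, w t := by
  simp [Matrix.sum_apply, weightedShift_pow_apply, Fin.val_eq_val]

end WeightedShift

section CommuteWeightedShift

variable {K : Type*} [Field K] {m : ℕ} {w : ℕ → K}

/-- Row `i + 1` of `X` is row `i` of `weightedShift m w * X = X * weightedShift m w`, divided
by `w i`; induct on rows. -/
theorem eq_zero_of_commute_weightedShift (hw : ∀ i, w i ≠ 0)
    {X : Matrix (Fin (m + 1)) (Fin (m + 1)) K} (hX : Commute (weightedShift m w) X)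
    (h0 : X 0 = 0) : X = 0 := by
  suffices ∀ i : ℕ, ∀ h : i < m + 1, X ⟨i, h⟩ = 0 from funext fun i => this i i.2
  intro i
  induction i with
  | zero => exact fun _ => h0
  | succ i ih =>
    intro h
    ext j
    have hij := congr_fun₂ hX.eq ⟨i, by omega⟩ j
    rw [weightedShift_mul_apply, dif_pos h, mul_apply] at hij
    simpa [ih (by omega), hw] using hij

theorem eq_sum_smul_weightedShift_pow_of_commute (hw : ∀ i, w i ≠ 0)
    {X : Matrix (Fin (m + 1)) (Fin (m + 1)) K} (hX : Commute (weightedShift m w) X) :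
    X = ∑ d : Fin (m + 1), (X 0 d / ∏ t ∈ Finset.range d, w t) • weightedShift m w ^ (d : ℕ) := by
  refine sub_eq_zero.1 (eq_zero_of_commute_weightedShift hw (hX.sub_right ?_) ?_)
  · exact Commute.sum_right _ _ _ fun d _ => ((Commute.refl _).pow_right _).smul_right _
  · ext j
    rw [Matrix.sub_apply, sum_smul_weightedShift_pow_apply_zero,
      div_mul_cancel₀ _ (Finset.prod_ne_zero_iff.2 fun t _ => hw t), sub_self, Pi.zero_apply]

theorem linearIndependent_weightedShift_pow (hw : ∀ i, w i ≠ 0) :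
    LinearIndependent K fun d : Fin (m + 1) => weightedShift m w ^ (d : ℕ) := by
  refine Fintype.linearIndependent_iff.2 fun a ha j => ?_
  have := sum_smul_weightedShift_pow_apply_zero w a j
  rw [ha, Matrix.zero_apply, eq_comm] at this
  exact (mul_eq_zero.1 this).resolve_right (Finset.prod_ne_zero_iff.2 fun t _ => hw t)

end CommuteWeightedShift

theorem isUnit_permMatrix {ι R : Type*} [Fintype ι] [DecidableEq ι] [Semiring R]
    (σ : Equiv.Perm ι) : IsUnit (σ.permMatrix R) := by
  simpa using (Group.isUnit σ⁻¹).map (permMatrixHom (R := R))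

theorem isSkewAdjoint_weightedShift {R : Type*} [CommRing R] {m : ℕ} {w : ℕ → R}
    (hw : ∀ i j, i + j + 1 = m → w j = -w i) :
    (Fin.revPerm.permMatrix R).IsSkewAdjoint (weightedShift m w) := by
  rw [Matrix.IsSkewAdjoint, Matrix.IsAdjointPair, PEquiv.mul_toMatrix_toPEquiv,
    PEquiv.toMatrix_toPEquiv_mul]
  ext i j
  simp only [submatrix_apply, transpose_apply, weightedShift, Matrix.neg_apply, of_apply, id,
    Fin.revPerm_symm, Fin.revPerm_apply, Fin.val_rev]
  by_cases h : (i : ℕ) + j = m + 1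
  · rw [if_pos (by omega), if_pos (by omega)]
    exact hw _ _ (by omega)
  · rw [if_neg (by omega), if_neg (by omega), neg_zero]

theorem skewAdjoint_inf_centralizer_weightedShift {K : Type*} [Field K] [NeZero (2 : K)]
    {n : ℕ} {w : ℕ → K} (hw : ∀ i, w i ≠ 0) {J : Matrix (Fin (2 * n + 1)) (Fin (2 * n + 1)) K}
    (hJ : IsUnit J) (hA : J.IsSkewAdjoint (weightedShift (2 * n) w)) :
    skewAdjointMatricesSubmodule J
        ⊓ Subalgebra.toSubmodule (Subalgebra.centralizer K {weightedShift (2 * n) w})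
      = Submodule.span K
          (Set.range fun k : Fin n => weightedShift (2 * n) w ^ (2 * (k : ℕ) + 1)) := by
  refine le_antisymm (fun X ⟨hskew, hcomm⟩ => ?_)
    (hA.span_odd_pow_le fun k => odd_two_mul_add_one _)
  have hcomm : Commute (weightedShift (2 * n) w) X :=
    (Subalgebra.mem_centralizer_iff K).1 hcomm _ rfl
  rw [SetLike.mem_coe, mem_skewAdjointMatricesSubmodule,
    eq_sum_smul_weightedShift_pow_of_commute hw hcomm] at hskew
  rw [eq_sum_smul_weightedShift_pow_of_commute hw hcomm]
  refine Submodule.sum_mem _ fun d _ => ?_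
  rcases Nat.even_or_odd d with he | ⟨k, hk⟩
  · rw [hA.coeff_eq_zero_of_even hJ (linearIndependent_weightedShift_pow hw) hskew he, zero_smul]
    exact Submodule.zero_mem _
  · exact Submodule.smul_mem _ _ (Submodule.subset_span ⟨⟨k, by omega⟩, by rw [hk]⟩)

theorem stmt_1_general (n : ℕ)
    (F Λ : Matrix (Fin (2*n+1)) (Fin (2*n+1)) ℂ)
    (hF : ∀ i j : Fin (2*n+1), F i j = if (i : ℕ) + (j : ℕ) = 2*n then 1 else 0)
    (hΛ : ∀ i j : Fin (2*n+1),
      Λ i j = if (j : ℕ) = (i : ℕ) + 1 then (if (i : ℕ) < n then 1 else -1) else 0) :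
    (Λᵀ * F + F * Λ = 0)
    ∧ {X : Matrix (Fin (2*n+1)) (Fin (2*n+1)) ℂ | Xᵀ * F + F * X = 0 ∧ Λ * X = X * Λ}
        = (Submodule.span ℂ (Set.range fun k : Fin n => Λ ^ (2*(k : ℕ) + 1)) :
            Set (Matrix (Fin (2*n+1)) (Fin (2*n+1)) ℂ))
    ∧ Module.finrank ℂ
        (Submodule.span ℂ (Set.range fun k : Fin n => Λ ^ (2*(k : ℕ) + 1))) = n := by
  set w : ℕ → ℂ := fun i => if i < n then 1 else -1
  obtain rfl : Λ = weightedShift (2 * n) w := ext hΛ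
  obtain rfl : F = Fin.revPerm.permMatrix ℂ := ext fun i j => by
    simp only [hF, PEquiv.toMatrix_apply, Equiv.toPEquiv_apply, Option.mem_some_iff,
      Fin.revPerm_apply, Fin.ext_iff, Fin.val_rev]
    exact if_congr (by omega) rfl rfl
  have hw : ∀ i, w i ≠ 0 := fun i => by simp only [w]; split_ifs <;> norm_num
  have hA : (Fin.revPerm.permMatrix ℂ).IsSkewAdjoint (weightedShift (2 * n) w) :=
    isSkewAdjoint_weightedShift fun i j _ => by
      simp only [w]; split_ifs <;> first | omega | norm_num
  have skew_iff (X : Matrix (Fin (2 * n + 1)) (Fin (2 * n + 1)) ℂ) :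
      Xᵀ * Fin.revPerm.permMatrix ℂ + Fin.revPerm.permMatrix ℂ * X = 0
        ↔ (Fin.revPerm.permMatrix ℂ).IsSkewAdjoint X := by
    rw [Matrix.IsSkewAdjoint, Matrix.IsAdjointPair, Matrix.mul_neg, add_eq_zero_iff_eq_neg]
  refine ⟨(skew_iff _).2 hA, ?_, ?_⟩
  · rw [← skewAdjoint_inf_centralizer_weightedShift hw (isUnit_permMatrix _) hA]
    ext X
    simp [skew_iff, Set.mem_centralizer_iff, eq_comm]
  · have hli : LinearIndependent ℂ fun k : Fin n => weightedShift (2 * n) w ^ (2 * (k : ℕ) + 1) :=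
      (linearIndependent_weightedShift_pow hw).comp
        (fun k : Fin n => (⟨2 * k + 1, by omega⟩ : Fin (2 * n + 1))) fun k l h => by
          simpa [Fin.ext_iff] using h
    rw [finrank_span_eq_card hli, Fintype.card_fin]

/-- The centralizer of the regular nilpotent element
`Λ = Σ_{i=1}^n E_{i,i+1} − Σ_{i=n+1}^{2n} E_{i,i+1}` in `so(2n+1, ℂ)` (defined by the
antidiagonal form `F`) is the span of the odd powers `Λ^{2k−1}`, `1 ≤ k ≤ n`,
which is `n`-dimensional. -/
theorem stmt_1 (n : ℕ) (hn : 1 ≤ n)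
    (F Λ : Matrix (Fin (2*n+1)) (Fin (2*n+1)) ℂ)
    (hF : ∀ i j : Fin (2*n+1), F i j = if (i : ℕ) + (j : ℕ) = 2*n then 1 else 0)
    (hΛ : ∀ i j : Fin (2*n+1),
      Λ i j = if (j : ℕ) = (i : ℕ) + 1 then (if (i : ℕ) < n then 1 else -1) else 0) :
    (Λᵀ * F + F * Λ = 0)
    ∧ {X : Matrix (Fin (2*n+1)) (Fin (2*n+1)) ℂ | Xᵀ * F + F * X = 0 ∧ Λ * X = X * Λ}
        = (Submodule.span ℂ (Set.range fun k : Fin n => Λ ^ (2*(k : ℕ) + 1)) :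
            Set (Matrix (Fin (2*n+1)) (Fin (2*n+1)) ℂ))
    ∧ Module.finrank ℂ
        (Submodule.span ℂ (Set.range fun k : Fin n => Λ ^ (2*(k : ℕ) + 1))) = n :=
  stmt_1_general n F Λ hF hΛ
end

section
/- Let V be a finite-dimensional complex vector space, D : V → V a nilpotent linear endomorphism, W ⊆ V a linear subspace, i ∈ ℕ, and Γ ∈ W an element such that D^j(Γ) ∈ W for every integer j > i. Then there exists a map v : ℂ∖{0} → V with v(t) ∈ W for all t ≠ 0 such that exp(t⁻¹·D)(v(t)) converges to (1/i!)·D^i(Γ) as t → 0 (with t ≠ 0). -/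
/-!
Put `v t = exp(-t⁻¹ D) (p t)`, where `p t = ∑_{k ≤ i} t^(i-k) / k! • D^k Γ` collects the terms of
`t^i • exp(t⁻¹ D) Γ` carrying non-negative powers of `t`. Then `exp(t⁻¹ D) (v t) = p t`, a polynomial
in `t` with value `D^i Γ / i!` at `0`. On the other hand `v t = t^i • Γ - exp(-t⁻¹ D) r`, where the
remainder `r` only involves the vectors `D^j Γ` with `j > i`; all `D`-iterates of these lie in `W`,
hence so does `exp(-t⁻¹ D) r`.
-/

/-- The exponential of a (nilpotent) endomorphism of a finite-dimensional complex vector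
space, given by the finite exponential series (all terms of degree `> finrank V` vanish
for a nilpotent endomorphism). -/
noncomputable def nilExp {V : Type*} [AddCommGroup V] [Module ℂ V] [FiniteDimensional ℂ V]
    (f : Module.End ℂ V) : Module.End ℂ V :=
  ∑ k ∈ Finset.range (Module.finrank ℂ V + 1), (k.factorial : ℂ)⁻¹ • f ^ k

open Finset Filter Topology Module

theorem IsNilpotent.pow_finrank_eq_zero {K V : Type*} [Field K] [AddCommGroup V] [Module K V]
    [FiniteDimensional K V] {f : Module.End K V} (hf : IsNilpotent f) : f ^ finrank K V = 0 := by
  simpa [hf.charpoly_eq_X_pow_finrank] using f.aeval_self_charpoly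

theorem tendsto_sum_range_pow_sub_smul {R M : Type*} [CommSemiring R] [TopologicalSpace R]
    [IsTopologicalSemiring R] [AddCommMonoid M] [Module R M] [TopologicalSpace M] [ContinuousAdd M]
    [ContinuousSMul R M] (y : ℕ → M) (i : ℕ) :
    Tendsto (fun t : R => ∑ k ∈ range (i + 1), t ^ (i - k) • y k) (𝓝 0) (𝓝 (y i)) := by
  have hcont : Continuous fun t : R => ∑ k ∈ range (i + 1), t ^ (i - k) • y k := by fun_prop
  convert hcont.tendsto 0 using 2
  rw [sum_range_succ, Nat.sub_self, pow_zero, one_smul, sum_eq_zero, zero_add]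
  intro k hk
  rw [zero_pow (Nat.sub_ne_zero_of_lt (mem_range.mp hk)), zero_smul]

theorem IsNilpotent.exp_eq_sum_range_smul {K A : Type*} [DivisionRing K] [CharZero K] [Ring A]
    [Module K A] [Module ℚ A] {a : A} {n : ℕ} (ha : a ^ n = 0) :
    IsNilpotent.exp a = ∑ k ∈ range n, (k.factorial : K)⁻¹ • a ^ k := by
  rw [IsNilpotent.exp_eq_sum ha]
  refine sum_congr rfl fun k _ => ?_
  simpa using ratCast_smul_eq ℚ K (k.factorial : ℚ)⁻¹ (a ^ k)

section nilExp

variable {V : Type*} [AddCommGroup V] [Module ℂ V] [FiniteDimensional ℂ V]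

theorem nilExp_eq_isNilpotent_exp [Module ℚ (Module.End ℂ V)] {f : Module.End ℂ V}
    (hf : IsNilpotent f) : nilExp f = IsNilpotent.exp f :=
  (IsNilpotent.exp_eq_sum_range_smul (K := ℂ)
    (pow_eq_zero_of_le (Nat.le_succ _) hf.pow_finrank_eq_zero)).symm

theorem nilExp_eq_sum_range {f : Module.End ℂ V} {n : ℕ} (hf : f ^ n = 0) :
    nilExp f = ∑ k ∈ range n, (k.factorial : ℂ)⁻¹ • f ^ k := by
  let _ := Module.compHom (Module.End ℂ V) (algebraMap ℚ ℂ)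
  rw [nilExp_eq_isNilpotent_exp ⟨n, hf⟩, IsNilpotent.exp_eq_sum_range_smul (K := ℂ) hf]

theorem nilExp_mul_nilExp_neg {f : Module.End ℂ V} (hf : IsNilpotent f) :
    nilExp f * nilExp (-f) = 1 := by
  let _ := Module.compHom (Module.End ℂ V) (algebraMap ℚ ℂ)
  rw [nilExp_eq_isNilpotent_exp hf, nilExp_eq_isNilpotent_exp hf.neg]
  exact IsNilpotent.exp_mul_exp_neg_self hf

theorem nilExp_neg_mul_nilExp {f : Module.End ℂ V} (hf : IsNilpotent f) :
    nilExp (-f) * nilExp f = 1 := by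
  let _ := Module.compHom (Module.End ℂ V) (algebraMap ℚ ℂ)
  rw [nilExp_eq_isNilpotent_exp hf, nilExp_eq_isNilpotent_exp hf.neg]
  exact IsNilpotent.exp_neg_mul_exp_self hf

theorem nilExp_smul_apply_mem (c : ℂ) {f : Module.End ℂ V} {W : Submodule ℂ V} {x : V}
    (hx : ∀ k, (f ^ k) x ∈ W) : nilExp (c • f) x ∈ W := by
  simp only [nilExp, LinearMap.sum_apply, LinearMap.smul_apply, smul_pow]
  exact W.sum_mem fun k _ => W.smul_mem _ (W.smul_mem _ (hx k))

theorem pow_smul_nilExp_inv_smul_apply {D : Module.End ℂ V} {n i : ℕ} (hD : D ^ n = 0)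
    (hin : i < n) {t : ℂ} (ht : t ≠ 0) (x : V) :
    t ^ i • nilExp (t⁻¹ • D) x =
      ∑ k ∈ range (i + 1), t ^ (i - k) • ((k.factorial : ℂ)⁻¹ • (D ^ k) x) +
        ∑ k ∈ Ico (i + 1) n, (t ^ i * t⁻¹ ^ k * (k.factorial : ℂ)⁻¹) • (D ^ k) x := by
  rw [nilExp_eq_sum_range (f := t⁻¹ • D) (by rw [smul_pow, hD, smul_zero])]
  simp only [LinearMap.sum_apply, LinearMap.smul_apply, smul_pow, smul_sum, smul_smul]
  rw [← sum_range_add_sum_Ico _ hin]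
  congr 1 <;> refine sum_congr rfl fun k hk => ?_
  · rw [pow_sub₀ t ht (Nat.le_of_lt_succ (mem_range.mp hk)), inv_pow]
    ring_nf
  · ring_nf

end nilExp

/-- Unipotent deformation: if `Γ ∈ W` and `D^j Γ ∈ W` for all `j > i`, then there is a
family `v(t) ∈ W` with `exp(t⁻¹ D)(v(t)) → (1/i!) D^i Γ` as `t → 0`, `t ≠ 0`. -/
theorem stmt_5 {V : Type*} [AddCommGroup V] [Module ℂ V] [TopologicalSpace V]
    [IsTopologicalAddGroup V] [ContinuousSMul ℂ V] [FiniteDimensional ℂ V]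
    (D : Module.End ℂ V) (hD : IsNilpotent D) (W : Submodule ℂ V) (i : ℕ)
    (Γ : V) (hΓ : Γ ∈ W) (hHigh : ∀ j : ℕ, i < j → (D ^ j) Γ ∈ W) :
    ∃ v : ℂ → V, (∀ t : ℂ, t ≠ 0 → v t ∈ W) ∧
      Filter.Tendsto (fun t : ℂ => nilExp (t⁻¹ • D) (v t)) (nhdsWithin 0 {0}ᶜ)
        (nhds ((i.factorial : ℂ)⁻¹ • (D ^ i) Γ)) := by
  have hDn : D ^ (finrank ℂ V + (i + 1)) = 0 :=
    pow_eq_zero_of_le (Nat.le_add_right _ _) hD.pow_finrank_eq_zero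
  set y : ℕ → V := fun k => (k.factorial : ℂ)⁻¹ • (D ^ k) Γ
  set p : ℂ → V := fun t => ∑ k ∈ range (i + 1), t ^ (i - k) • y k
  refine ⟨fun t => nilExp (-(t⁻¹ • D)) (p t), fun t ht => ?_, ?_⟩
  · have hp : p t = _ :=
      eq_sub_of_add_eq (pow_smul_nilExp_inv_smul_apply hDn (by omega) ht Γ).symm
    beta_reduce
    rw [hp, map_sub, map_smul, ← Module.End.mul_apply, nilExp_neg_mul_nilExp (hD.smul _),
      Module.End.one_apply, ← neg_smul]
    refine W.sub_mem (W.smul_mem _ hΓ) (nilExp_smul_apply_mem _ fun k => ?_)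
    simp only [map_sum, map_smul, ← Module.End.mul_apply, ← pow_add]
    exact W.sum_mem fun j hj => W.smul_mem _ (hHigh _ (by grind))
  · refine ((tendsto_sum_range_pow_sub_smul y i).mono_left nhdsWithin_le_nhds).congr' ?_
    filter_upwards with t
    rw [← Module.End.mul_apply, nilExp_mul_nilExp_neg (hD.smul _), Module.End.one_apply]
end

section
/- Let μ = (μ₁ ≥ μ₂ ≥ … ≥ μ_l) be a partition of n with all parts μ_k ≥ 1, and let 𝔞_μ ⊆ sl(n+1,ℂ) be the ℂ-linear span of the matrix units E_{j, n−k+2} for 1 ≤ k ≤ l and 1 ≤ j ≤ μ_k. Then 𝔞_μ is an n-dimensional abelian Lie ideal of the Borel subalgebra 𝔟 of upper triangular trace-zero matrices: dim 𝔞_μ = n, [𝔞_μ, 𝔞_μ] = 0, and [𝔟, 𝔞_μ] ⊆ 𝔞_μ. -/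
/-!
`𝔞_μ` is the space of matrices supported on the cells of the Young diagram of `μ` placed in
the top-right corner: column `n + 1 - k` (0-indexed) holds the top `μ k` rows. Since all `l`
parts are positive, each part is at most `n + 1 - l`, so every cell lies strictly above row
`n + 1 - l` and in a column `≥ n + 1 - l`. Hence no two cells compose, which makes products
in `𝔞_μ` vanish, and the diagram lies strictly above the diagonal. Multiplying by an upper
triangular matrix moves entries up a column or right along a row; as `μ` is non-increasing,
the diagram is closed under both moves, so `𝔞_μ` is `𝔟`-stable. Its dimension is the number
of cells, `∑ μ k = n`.
-/

open Finset

theorem Finset.add_card_sub_one_le_sum {ι : Type*} [DecidableEq ι] {t : Finset ι} {f : ι → ℕ}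
    (hf : ∀ i ∈ t, 1 ≤ f i) {k : ι} (hk : k ∈ t) : f k + (#t - 1) ≤ ∑ i ∈ t, f i := by
  rw [← add_sum_erase t f hk, ← card_erase_of_mem hk]
  gcongr
  simpa using card_nsmul_le_sum _ f 1 fun i hi => hf i (mem_of_mem_erase hi)

namespace Matrix

variable {R l m n : Type*}

section Semiring

variable [Semiring R]

variable (R) in
def supportedOn (s : Set (m × n)) : Submodule R (Matrix m n R) where
  carrier := {X | ∀ i j, (i, j) ∉ s → X i j = 0}
  add_mem' hX hY i j h := by simp [hX i j h, hY i j h]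
  zero_mem' _ _ _ := rfl
  smul_mem' c X hX i j h := by simp [hX i j h]

theorem mem_supportedOn {s : Set (m × n)} {X : Matrix m n R} :
    X ∈ supportedOn R s ↔ ∀ i j, (i, j) ∉ s → X i j = 0 :=
  Iff.rfl

theorem supportedOn_eq_span_single [Fintype m] [Fintype n] [DecidableEq m] [DecidableEq n]
    (s : Set (m × n)) :
    supportedOn R s = Submodule.span R ((fun p => single p.1 p.2 (1 : R)) '' s) := by
  apply le_antisymm
  · intro X hX
    rw [matrix_eq_sum_single X]
    refine Submodule.sum_mem _ fun i _ => Submodule.sum_mem _ fun j _ => ?_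
    by_cases h : (i, j) ∈ s
    · rw [← mul_one (X i j), ← smul_eq_mul, ← smul_single]
      exact Submodule.smul_mem _ _ (Submodule.subset_span ⟨(i, j), h, rfl⟩)
    · simp [hX i j h]
  · rw [Submodule.span_le]
    rintro _ ⟨⟨i, j⟩, h, rfl⟩ i' j' h'
    simp only [single_apply, ite_eq_right_iff, and_imp]
    rintro rfl rfl
    exact absurd h h'

theorem mul_apply_eq_zero_of_mem_supportedOn [Fintype m] {s : Set (l × m)} {t : Set (m × n)}
    {X : Matrix l m R} {Y : Matrix m n R} (hX : X ∈ supportedOn R s) (hY : Y ∈ supportedOn R t)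
    {i : l} {k : n} (h : ∀ j, (i, j) ∈ s → (j, k) ∉ t) : (X * Y) i k = 0 := by
  rw [mul_apply]
  refine Finset.sum_eq_zero fun j _ => ?_
  by_cases hij : (i, j) ∈ s
  · rw [mem_supportedOn.1 hY j k (h j hij), mul_zero]
  · rw [mem_supportedOn.1 hX i j hij, zero_mul]

theorem mul_eq_zero_of_mem_supportedOn [Fintype m] {s : Set (l × m)} {t : Set (m × n)}
    {X : Matrix l m R} {Y : Matrix m n R} (hX : X ∈ supportedOn R s) (hY : Y ∈ supportedOn R t)
    (h : ∀ i j k, (i, j) ∈ s → (j, k) ∉ t) : X * Y = 0 := by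
  ext i k
  exact mul_apply_eq_zero_of_mem_supportedOn hX hY (h i · k)

theorem trace_eq_zero_of_mem_supportedOn [Fintype m] {s : Set (m × m)} {X : Matrix m m R}
    (hX : X ∈ supportedOn R s) (hs : ∀ i, (i, i) ∉ s) : X.trace = 0 :=
  Finset.sum_eq_zero fun i _ => mem_supportedOn.1 hX i i (hs i)

section Preorder

variable [Preorder m] [Fintype m] {s : Set (m × m)} {B X : Matrix m m R}

theorem upperTriangular_mul_mem_supportedOn (hs : ∀ i j i', (i, j) ∈ s → i' ≤ i → (i', j) ∈ s)
    (hB : B ∈ supportedOn R {p | p.1 ≤ p.2}) (hX : X ∈ supportedOn R s) :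
    B * X ∈ supportedOn R s := mem_supportedOn.2 fun _ _ hik =>
  mul_apply_eq_zero_of_mem_supportedOn hB hX fun _ hij hjk => hik (hs _ _ _ hjk hij)

theorem mul_upperTriangular_mem_supportedOn (hs : ∀ i j j', (i, j) ∈ s → j ≤ j' → (i, j') ∈ s)
    (hB : B ∈ supportedOn R {p | p.1 ≤ p.2}) (hX : X ∈ supportedOn R s) :
    X * B ∈ supportedOn R s := mem_supportedOn.2 fun _ _ hik =>
  mul_apply_eq_zero_of_mem_supportedOn hX hB fun _ hij hjk => hik (hs _ _ _ hij hjk)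

end Preorder

end Semiring

theorem finrank_supportedOn [Ring R] [Nontrivial R] [StrongRankCondition R] [Fintype m] [Fintype n]
    [DecidableEq m] [DecidableEq n] (s : Set (m × n)) :
    Module.finrank R (supportedOn R s) = s.ncard := by
  classical
  have hli : LinearIndependent R fun p : s => single p.1.1 p.1.2 (1 : R) := by
    convert (stdBasis R m n).linearIndependent.comp _ Subtype.val_injective
    exact (stdBasis_eq_single R _ _).symm
  rw [supportedOn_eq_span_single, Set.image_eq_range, finrank_span_eq_card hli,
    ← Nat.card_eq_fintype_card, Nat.card_coe_set_eq]

end Matrix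

/-- The 0-indexed positions `(j - 1, n + 1 - k)` of the matrix units `E_{j, n-k+2}`. -/
def cornerCells (n l : ℕ) (μ : ℕ → ℕ) : Set (Fin (n + 1) × Fin (n + 1)) :=
  {p | ∃ k, 1 ≤ k ∧ k ≤ l ∧ (p.2 : ℕ) + k = n + 1 ∧ (p.1 : ℕ) < μ k}

section cornerCells

variable {n l : ℕ} {μ : ℕ → ℕ} {a b : Fin (n + 1)}

theorem mem_cornerCells :
    (a, b) ∈ cornerCells n l μ ↔ ∃ k, 1 ≤ k ∧ k ≤ l ∧ (b : ℕ) + k = n + 1 ∧ (a : ℕ) < μ k :=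
  Iff.rfl

theorem le_col_add_of_mem_cornerCells (h : (a, b) ∈ cornerCells n l μ) : n + 1 ≤ b + l := by
  obtain ⟨k, -, hkl, hb, -⟩ := mem_cornerCells.1 h
  omega

theorem row_add_lt_of_mem_cornerCells (hμ : ∀ k, 1 ≤ k → k ≤ l → μ k + l ≤ n + 1)
    (h : (a, b) ∈ cornerCells n l μ) : a + l < n + 1 := by
  obtain ⟨k, hk1, hkl, -, ha⟩ := mem_cornerCells.1 h
  have := hμ k hk1 hkl
  omega

theorem mem_cornerCells_of_row_le {a' : Fin (n + 1)} (h : (a, b) ∈ cornerCells n l μ)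
    (ha : a' ≤ a) : (a', b) ∈ cornerCells n l μ := by
  obtain ⟨k, hk1, hkl, hb, hak⟩ := mem_cornerCells.1 h
  exact mem_cornerCells.2 ⟨k, hk1, hkl, hb, lt_of_le_of_lt ha hak⟩

theorem mem_cornerCells_of_col_le (hmono : ∀ k k', 1 ≤ k → k ≤ k' → k' ≤ l → μ k' ≤ μ k)
    {b' : Fin (n + 1)} (h : (a, b) ∈ cornerCells n l μ) (hb : b ≤ b') :
    (a, b') ∈ cornerCells n l μ := by
  obtain ⟨k, hk1, hkl, hbk, hak⟩ := mem_cornerCells.1 h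
  have hb' : (b' : ℕ) ≤ n := Nat.lt_succ_iff.1 b'.isLt
  have hbb' : (b : ℕ) ≤ b' := hb
  exact mem_cornerCells.2 ⟨n + 1 - b', by omega, by omega, by omega,
    lt_of_lt_of_le hak (hmono _ _ (by omega) (by omega) hkl)⟩

theorem ncard_cornerCells (hμ : ∀ k, 1 ≤ k → k ≤ l → μ k + l ≤ n + 1) :
    (cornerCells n l μ).ncard = ∑ k ∈ Icc 1 l, μ k := by
  calc (cornerCells n l μ).ncard
      = (((Icc 1 l).sigma fun k => range (μ k) : Finset (Σ _ : ℕ, ℕ)) :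
          Set (Σ _ : ℕ, ℕ)).ncard := by
        refine Set.ncard_congr (fun p _ => ⟨n + 1 - p.2, p.1⟩) ?_ ?_ ?_
        · rintro ⟨a, b⟩ h
          obtain ⟨k, hk1, hkl, hb, ha⟩ := mem_cornerCells.1 h
          simp only [coe_sigma, Set.mem_sigma_iff, coe_Icc, Set.mem_Icc, coe_range, Set.mem_Iio]
          refine ⟨by omega, ?_⟩
          rwa [show n + 1 - (b : ℕ) = k by omega]
        · rintro ⟨a, b⟩ ⟨a', b'⟩ - - h
          simp only [Sigma.mk.injEq, heq_eq_eq, Prod.mk.injEq, Fin.ext_iff] at h ⊢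
          omega
        · rintro ⟨k, j⟩ h
          simp only [coe_sigma, Set.mem_sigma_iff, coe_Icc, Set.mem_Icc, coe_range,
            Set.mem_Iio] at h
          have := hμ k h.1.1 h.1.2
          refine ⟨(⟨j, by omega⟩, ⟨n + 1 - k, by omega⟩),
            ⟨k, h.1.1, h.1.2, Nat.sub_add_cancel (by omega), h.2⟩, ?_⟩
          simp only [Sigma.mk.injEq, heq_eq_eq, and_true]
          omega
    _ = ∑ k ∈ Icc 1 l, μ k := by rw [Set.ncard_coe_finset, card_sigma]; simp

end cornerCells

theorem span_cornerUnits_eq_supportedOn (R : Type*) [Semiring R] (n l : ℕ) (μ : ℕ → ℕ) :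
    Submodule.span R {E | ∃ k j : ℕ, 1 ≤ k ∧ k ≤ l ∧ 1 ≤ j ∧ j ≤ μ k ∧
        E = Matrix.of fun a b : Fin (n+1) =>
          if (a : ℕ) + 1 = j ∧ (b : ℕ) + k = n + 1 then (1 : R) else 0} =
      Matrix.supportedOn R (cornerCells n l μ) := by
  classical
  apply le_antisymm
  · rw [Submodule.span_le]
    rintro _ ⟨k, j, hk1, hkl, hj1, hjμ, rfl⟩ a b hab
    simp only [Matrix.of_apply, ite_eq_right_iff, and_imp]
    intro ha hb
    exact absurd (mem_cornerCells.2 ⟨k, hk1, hkl, hb, by omega⟩) hab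
  · rw [Matrix.supportedOn_eq_span_single]
    refine Submodule.span_mono ?_
    rintro _ ⟨⟨a, b⟩, h, rfl⟩
    obtain ⟨k, hk1, hkl, hb, ha⟩ := mem_cornerCells.1 h
    refine ⟨k, a + 1, hk1, hkl, by omega, ha, ?_⟩
    ext a' b'
    simp only [Matrix.single_apply, Matrix.of_apply, Fin.ext_iff]
    exact if_congr (by omega) rfl rfl

theorem stmt_8_general (n l : ℕ) (μ : ℕ → ℕ)
    (hpos : ∀ k, 1 ≤ k → k ≤ l → 1 ≤ μ k)
    (hmono : ∀ k k', 1 ≤ k → k ≤ k' → k' ≤ l → μ k' ≤ μ k)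
    (hsum : ∑ k ∈ Finset.Icc 1 l, μ k = n)
    (A : Submodule ℂ (Matrix (Fin (n+1)) (Fin (n+1)) ℂ))
    (hA : A = Submodule.span ℂ
      {E | ∃ k j : ℕ, 1 ≤ k ∧ k ≤ l ∧ 1 ≤ j ∧ j ≤ μ k ∧
        E = Matrix.of fun a b : Fin (n+1) =>
          if (a : ℕ) + 1 = j ∧ (b : ℕ) + k = n + 1 then (1 : ℂ) else 0}) :
    Module.finrank ℂ A = n
    ∧ (∀ X ∈ A, ∀ Y ∈ A, X * Y - Y * X = 0)
    ∧ (∀ X ∈ A, Matrix.trace X = 0 ∧ ∀ a b : Fin (n+1), (b : ℕ) < (a : ℕ) → X a b = 0)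
    ∧ (∀ B : Matrix (Fin (n+1)) (Fin (n+1)) ℂ, Matrix.trace B = 0 →
        (∀ a b : Fin (n+1), (b : ℕ) < (a : ℕ) → B a b = 0) →
        ∀ X ∈ A, B * X - X * B ∈ A) := by
  have hμ : ∀ k, 1 ≤ k → k ≤ l → μ k + l ≤ n + 1 := fun k hk1 hkl => by
    have := add_card_sub_one_le_sum (fun i hi => hpos i (mem_Icc.1 hi).1 (mem_Icc.1 hi).2)
      (mem_Icc.2 ⟨hk1, hkl⟩)
    rw [Nat.card_Icc, hsum] at this
    omega
  have hlt : ∀ a b, (a, b) ∈ cornerCells n l μ → a < b := fun a b h => by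
    have := row_add_lt_of_mem_cornerCells hμ h
    have := le_col_add_of_mem_cornerCells h
    exact Fin.lt_def.2 (by omega)
  have hsq : ∀ a b c, (a, b) ∈ cornerCells n l μ → (b, c) ∉ cornerCells n l μ :=
    fun a b c h h' => by
      have := le_col_add_of_mem_cornerCells h
      have := row_add_lt_of_mem_cornerCells hμ h'
      omega
  rw [span_cornerUnits_eq_supportedOn] at hA
  subst hA
  refine ⟨?_, fun X hX Y hY => ?_, fun X hX => ⟨?_, fun a b hba => ?_⟩, fun B _ hB X hX => ?_⟩
  · rw [Matrix.finrank_supportedOn, ncard_cornerCells hμ, hsum]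
  · rw [Matrix.mul_eq_zero_of_mem_supportedOn hX hY hsq,
      Matrix.mul_eq_zero_of_mem_supportedOn hY hX hsq, sub_zero]
  · exact Matrix.trace_eq_zero_of_mem_supportedOn hX fun a h => (hlt a a h).false
  · exact Matrix.mem_supportedOn.1 hX a b fun h => (hlt a b h).asymm hba
  · have hB' : B ∈ Matrix.supportedOn ℂ {p | p.1 ≤ p.2} :=
      Matrix.mem_supportedOn.2 fun a b h => hB a b (not_le.1 h)
    exact sub_mem
      (Matrix.upperTriangular_mul_mem_supportedOn (fun _ _ _ => mem_cornerCells_of_row_le) hB' hX)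
      (Matrix.mul_upperTriangular_mem_supportedOn
        (fun _ _ _ => mem_cornerCells_of_col_le hmono) hB' hX)

/-- For a partition `μ` of `n`, the span `𝔞_μ` of the matrix units `E_{j, n−k+2}`
(`1 ≤ k ≤ l`, `1 ≤ j ≤ μ_k`) is an `n`-dimensional abelian ideal of the Borel
subalgebra of upper triangular trace-zero matrices in `sl(n+1, ℂ)`. -/
theorem stmt_8 (n l : ℕ) (hl : 1 ≤ l) (μ : ℕ → ℕ)
    (hpos : ∀ k, 1 ≤ k → k ≤ l → 1 ≤ μ k)
    (hmono : ∀ k k', 1 ≤ k → k ≤ k' → k' ≤ l → μ k' ≤ μ k)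
    (hsum : ∑ k ∈ Finset.Icc 1 l, μ k = n)
    (A : Submodule ℂ (Matrix (Fin (n+1)) (Fin (n+1)) ℂ))
    (hA : A = Submodule.span ℂ
      {E | ∃ k j : ℕ, 1 ≤ k ∧ k ≤ l ∧ 1 ≤ j ∧ j ≤ μ k ∧
        E = Matrix.of fun a b : Fin (n+1) =>
          if (a : ℕ) + 1 = j ∧ (b : ℕ) + k = n + 1 then (1 : ℂ) else 0}) :
    Module.finrank ℂ A = n
    ∧ (∀ X ∈ A, ∀ Y ∈ A, X * Y - Y * X = 0)
    ∧ (∀ X ∈ A, Matrix.trace X = 0 ∧ ∀ a b : Fin (n+1), (b : ℕ) < (a : ℕ) → X a b = 0)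
    ∧ (∀ B : Matrix (Fin (n+1)) (Fin (n+1)) ℂ, Matrix.trace B = 0 →
        (∀ a b : Fin (n+1), (b : ℕ) < (a : ℕ) → B a b = 0) →
        ∀ X ∈ A, B * X - X * B ∈ A) :=
  stmt_8_general n l μ hpos hmono hsum A hA
end

section
/- Let μ = (μ₁ ≥ … ≥ μ_l) be a partition of n with all parts μ_k ≥ 1, and for h ∈ {1,…,n} let i(h) := μ₁ + 1 − (h − Σ_{i>k} μ_i), where k is the unique index with Σ_{i>k} μ_i < h ≤ Σ_{i≥k} μ_i. For z ∈ ℤⁿ and 1 ≤ j ≤ n+1−h write z_j(h) := Σ_{k=j}^{j+h−1} z_k. Then there exists z = (z₁,…,zₙ) ∈ ℤⁿ such that: z_{μ₁} = 0; z_i > 0 for all i ≠ μ₁; and for every h ∈ {1,…,n} and every j with 1 ≤ j ≤ n+1−h and j ≠ i(h), one has z_{i(h)}(h) < z_j(h). -/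
/-!
Write `z t = F t - F (t - 1)`, so that every window sum `z_j(h)` is the increment
`F (j + h - 1) - F (j - 1)`. With `c = μ₁` and `S` the set of tail sums `Σ_{i>k} μ_i`, let `F`
have slope `2n + 2` up to `c` and slope `2n + 1` after it, plus a penalty `n` at the points
`c + y` with `y ∉ S`. For `h = m + T` with `T = Σ_{i>k} μ_i` and `1 ≤ m ≤ μ_k ≤ c`, the window
from `c - m + 1 = i(h)` to `c + T` costs `(2n + 1)(h - 1) + m - 1`. A window on one side of `c`
costs at least `(2n + 1) h - n`; a window through `c` ending at `c + y` either pays the penalty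
or has `y ∈ S`, and then `y < T` because `T` is the largest tail sum below `h`, so it starts
further left and pays for the steeper slope.
-/

open Finset

theorem Finset.sum_Icc_sub_pred {G : Type*} [AddCommGroup G] (f : ℕ → G) {a b : ℕ} (hab : a ≤ b) :
    ∑ t ∈ Icc (a + 1) b, (f t - f (t - 1)) = f b - f a := by
  rw [← Ico_add_one_right_eq_Icc, ← sum_Ico_add', ← sum_Ico_sub f hab]
  simp

namespace PartitionIE

open Classical in
noncomputable def penalty (N : ℕ) (S : Set ℕ) (y : ℕ) : ℤ := if y ∈ S then 0 else N

theorem penalty_nonneg (N : ℕ) (S : Set ℕ) (y : ℕ) : 0 ≤ penalty N S y := by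
  unfold penalty; split_ifs <;> omega

theorem penalty_le (N : ℕ) (S : Set ℕ) (y : ℕ) : penalty N S y ≤ N := by
  unfold penalty; split_ifs <;> omega

theorem penalty_of_mem {N : ℕ} {S : Set ℕ} {y : ℕ} (hy : y ∈ S) : penalty N S y = 0 := if_pos hy

theorem penalty_of_notMem {N : ℕ} {S : Set ℕ} {y : ℕ} (hy : y ∉ S) : penalty N S y = N := if_neg hy

noncomputable def potential (N c : ℕ) (S : Set ℕ) (i : ℕ) : ℤ :=
  if i < c then (2 * N + 2) * i else (2 * N + 1) * ((i : ℤ) - 1) + c - 1 + penalty N S (i - c)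

variable {N c : ℕ} {S : Set ℕ}

theorem potential_of_lt {i : ℕ} (h : i < c) : potential N c S i = (2 * N + 2) * i := if_pos h

theorem potential_of_le {i : ℕ} (h : c ≤ i) :
    potential N c S i = (2 * N + 1) * ((i : ℤ) - 1) + c - 1 + penalty N S (i - c) :=
  if_neg (not_lt.2 h)

theorem potential_sub_pred_self (h0 : 0 ∈ S) :
    potential N c S c - potential N c S (c - 1) = 0 := by
  rcases Nat.eq_zero_or_pos c with rfl | hc
  · simp
  rw [potential_of_le le_rfl, potential_of_lt (by omega), Nat.sub_self, penalty_of_mem h0]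
  push_cast [Nat.cast_sub hc]
  ring

theorem potential_sub_pred_pos {i : ℕ} (hi : 1 ≤ i) (hic : i ≠ c) :
    0 < potential N c S i - potential N c S (i - 1) := by
  rcases lt_or_gt_of_ne hic with h | h
  · rw [potential_of_lt h, potential_of_lt (by omega)]
    push_cast [Nat.cast_sub hi]
    linarith
  · rw [potential_of_le h.le, potential_of_le (by omega)]
    have := penalty_nonneg N S (i - c)
    have := penalty_le N S (i - 1 - c)
    push_cast [Nat.cast_sub hi]
    linarith

theorem potential_window_lt {m T s : ℕ} (hT : T ∈ S) (hmax : ∀ y ∈ S, y < m + T → y ≤ T)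
    (hm : 1 ≤ m) (hmc : m ≤ c) (hmN : m ≤ N) (hs : s ≠ c - m) :
    potential N c S (c + T) - potential N c S (c - m) <
      potential N c S (s + (m + T)) - potential N c S s := by
  have hcheap : potential N c S (c + T) - potential N c S (c - m)
      = (2 * N + 1) * ((m : ℤ) + T - 1) + m - 1 := by
    rw [potential_of_le (by omega), potential_of_lt (by omega), Nat.add_sub_cancel_left,
      penalty_of_mem hT]
    push_cast [Nat.cast_sub hmc]
    ring
  rw [hcheap]
  rcases lt_or_ge (s + (m + T)) c with hend | hend
  · rw [potential_of_lt hend, potential_of_lt (by omega)]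
    push_cast
    nlinarith
  rcases lt_or_ge s c with hstart | hstart
  · rw [potential_of_le hend, potential_of_lt hstart]
    have key : (m : ℤ) < c - s + penalty N S (s + (m + T) - c) := by
      by_cases hy : s + (m + T) - c ∈ S
      · have := hmax _ hy (by omega)
        rw [penalty_of_mem hy]
        omega
      · rw [penalty_of_notMem hy]
        omega
    push_cast
    linarith
  · rw [potential_of_le hend, potential_of_le hstart]
    have := penalty_nonneg N S (s + (m + T) - c)
    have := penalty_le N S (s - c)
    push_cast
    linarith

def tailSums (μ : ℕ → ℕ) (l : ℕ) : Set ℕ := {y | ∃ k ∈ Icc 1 l, ∑ i ∈ Icc (k + 1) l, μ i = y}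

theorem zero_mem_tailSums {μ : ℕ → ℕ} {l : ℕ} (hl : 1 ≤ l) : 0 ∈ tailSums μ l :=
  ⟨l, mem_Icc.2 ⟨hl, le_rfl⟩, by simp⟩

theorem le_of_mem_tailSums {μ : ℕ → ℕ} {l k h y : ℕ}
    (hh : h ≤ ∑ i ∈ Icc k l, μ i) (hy : y ∈ tailSums μ l) (hyh : y < h) :
    y ≤ ∑ i ∈ Icc (k + 1) l, μ i := by
  obtain ⟨k', -, rfl⟩ := hy
  by_contra! hlt
  have hk' : k' + 1 ≤ k := by
    by_contra!
    exact hlt.not_ge (sum_le_sum_of_subset (Icc_subset_Icc_left (by omega)))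
  have := sum_le_sum_of_subset (f := μ) (Icc_subset_Icc_left hk' : Icc k l ⊆ Icc (k' + 1) l)
  omega

end PartitionIE

open PartitionIE

theorem stmt_10_general (n l : ℕ) (hl : 1 ≤ l) (μ : ℕ → ℕ)
    (hmono : ∀ k k', 1 ≤ k → k ≤ k' → k' ≤ l → μ k' ≤ μ k) :
    ∃ z : ℕ → ℤ,
      z (μ 1) = 0
      ∧ (∀ i, 1 ≤ i → i ≤ n → i ≠ μ 1 → 0 < z i)
      ∧ (∀ h k, 1 ≤ h → h ≤ n → 1 ≤ k → k ≤ l →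
          (∑ i ∈ Finset.Icc (k+1) l, μ i) < h → h ≤ ∑ i ∈ Finset.Icc k l, μ i →
          ∀ j, 1 ≤ j → j ≤ n + 1 - h →
            j ≠ μ 1 + 1 - (h - ∑ i ∈ Finset.Icc (k+1) l, μ i) →
            (∑ t ∈ Finset.Icc (μ 1 + 1 - (h - ∑ i ∈ Finset.Icc (k+1) l, μ i))
                ((μ 1 + 1 - (h - ∑ i ∈ Finset.Icc (k+1) l, μ i)) + h - 1), z t)
              < ∑ t ∈ Finset.Icc j (j + h - 1), z t) := by
  set F := potential n (μ 1) (tailSums μ l)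
  refine ⟨fun t => F t - F (t - 1), potential_sub_pred_self (zero_mem_tailSums hl),
    fun i hi _ hic => potential_sub_pred_pos hi hic, ?_⟩
  intro h k _ hhn hk hkl hlow hhigh j hj _ hji
  set T := ∑ i ∈ Icc (k + 1) l, μ i
  obtain ⟨m, rfl⟩ : ∃ m, h = m + T := ⟨h - T, by omega⟩
  obtain ⟨s, rfl⟩ : ∃ s, j = s + 1 := ⟨j - 1, by omega⟩
  have hmk : m ≤ μ k := by
    rw [← Ioc_insert_left hkl, sum_insert (by simp), ← Icc_add_one_left_eq_Ioc] at hhigh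
    omega
  have hmc : m ≤ μ 1 := hmk.trans (hmono 1 k le_rfl hk hkl)
  rw [show μ 1 + 1 - (m + T - T) = μ 1 - m + 1 by omega,
    show μ 1 - m + 1 + (m + T) - 1 = μ 1 + T by omega,
    show s + 1 + (m + T) - 1 = s + (m + T) by omega,
    sum_Icc_sub_pred F (by omega), sum_Icc_sub_pred F (by omega)]
  exact potential_window_lt ⟨k, mem_Icc.2 ⟨hk, hkl⟩, rfl⟩
    (fun y hy hyh => le_of_mem_tailSums hhigh hy hyh) (by omega) hmc (by omega) (by omega)

/-- Proposition: for any partition `μ` of `n`, the system of inequalities `(IE_μ)`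
has an integer solution `z = (z₁, …, zₙ)`: `z_{μ₁} = 0`, `z_i > 0` for `i ≠ μ₁`, and
`z_{i(h)}(h) < z_j(h)` for all `1 ≤ h ≤ n` and `1 ≤ j ≤ n+1−h` with `j ≠ i(h)`, where
`i(h) = μ₁ + 1 − (h − Σ_{i>k} μ_i)` for the unique `k` with
`Σ_{i>k} μ_i < h ≤ Σ_{i≥k} μ_i`, and `z_j(h) = Σ_{t=j}^{j+h−1} z_t`. -/
theorem stmt_10 (n l : ℕ) (hl : 1 ≤ l) (μ : ℕ → ℕ)
    (hpos : ∀ k, 1 ≤ k → k ≤ l → 1 ≤ μ k)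
    (hmono : ∀ k k', 1 ≤ k → k ≤ k' → k' ≤ l → μ k' ≤ μ k)
    (hsum : ∑ k ∈ Finset.Icc 1 l, μ k = n) :
    ∃ z : ℕ → ℤ,
      z (μ 1) = 0
      ∧ (∀ i, 1 ≤ i → i ≤ n → i ≠ μ 1 → 0 < z i)
      ∧ (∀ h k, 1 ≤ h → h ≤ n → 1 ≤ k → k ≤ l →
          (∑ i ∈ Finset.Icc (k+1) l, μ i) < h → h ≤ ∑ i ∈ Finset.Icc k l, μ i →
          ∀ j, 1 ≤ j → j ≤ n + 1 - h →
            j ≠ μ 1 + 1 - (h - ∑ i ∈ Finset.Icc (k+1) l, μ i) →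
            (∑ t ∈ Finset.Icc (μ 1 + 1 - (h - ∑ i ∈ Finset.Icc (k+1) l, μ i))
                ((μ 1 + 1 - (h - ∑ i ∈ Finset.Icc (k+1) l, μ i)) + h - 1), z t)
              < ∑ t ∈ Finset.Icc j (j + h - 1), z t) :=
  stmt_10_general n l hl μ hmono
end

section
/- Let n = 2m be even with m ≥ 1 and let μ = (m, m) be the partition of n with two equal parts, so that i(h) = m+1−h for 1 ≤ h ≤ m and i(h) = n+1−h for m < h ≤ n. Then the vector z ∈ ℤⁿ defined by z_i = 2 for 1 ≤ i ≤ m−1, z_m = 0, z_{m+1} = 3, z_i = 2 for m+2 ≤ i ≤ n−1, and z_n = 1, satisfies the system (IE_μ): z_m = 0; z_i > 0 for i ≠ m; and for every h ∈ {1,…,n} and every j with 1 ≤ j ≤ n+1−h and j ≠ i(h), one has Σ_{k=i(h)}^{i(h)+h−1} z_k < Σ_{k=j}^{j+h−1} z_k. -/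
/-!
Write `z_k = P (k + 1) - P k` with `P i = 2 i - 2 [m < i] + [m + 1 < i] - [2 m < i]`. A window of
length `h` then sums to `2 h` corrected by `-2` if it contains `m`, `+1` if it contains `m + 1` and
`-1` if it contains `2 m`. The minimum `2 h - 2` is attained exactly by the window ending at `m`
when `h ≤ m`, and by the window ending at `2 m` (which then contains all three positions) when
`h > m`; these windows start at `i(h)`.
-/

open Finset

theorem Finset.sum_Icc_eq_sub_of_eq_sub {G : Type*} [AddCommGroup G] {z F : ℕ → G} {a b : ℕ}
    (hab : a ≤ b + 1) (hz : ∀ k ∈ Icc a b, z k = F (k + 1) - F k) :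
    ∑ k ∈ Icc a b, z k = F (b + 1) - F a := by
  rw [sum_congr rfl hz, ← Ico_add_one_right_eq_Icc, sum_Ico_sub F hab]

namespace TwoEqualParts

def potential (m i : ℕ) : ℤ :=
  2 * i - (if m < i then 2 else 0) + (if m + 1 < i then 1 else 0) - (if 2 * m < i then 1 else 0)

/-- The start `i(h)` of the minimal window of length `h` for the partition `(m, m)`. -/
def windowStart (m h : ℕ) : ℕ :=
  if h ≤ m then m + 1 - h else 2 * m + 1 - h

theorem potential_windowStart {m h : ℕ} (hh : 1 ≤ h) (hhm : h ≤ 2 * m) :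
    potential m (windowStart m h + h) - potential m (windowStart m h) = 2 * h - 2 := by
  unfold potential windowStart
  split_ifs <;> omega

theorem lt_potential_window {m h j : ℕ} (hh : 1 ≤ h) (hj : 1 ≤ j) (hjh : j + h ≤ 2 * m + 1)
    (hjs : j ≠ windowStart m h) :
    2 * h - 2 < potential m (j + h) - potential m j := by
  unfold potential windowStart at *
  split_ifs at * <;> omega

section Vector

variable {m : ℕ} {z : ℕ → ℤ}
    (hz1 : ∀ i, 1 ≤ i → i + 1 ≤ m → z i = 2)
    (hz2 : z m = 0)
    (hz3 : z (m + 1) = 3)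
    (hz4 : ∀ i, m + 2 ≤ i → i + 1 ≤ 2 * m → z i = 2)
    (hz5 : z (2 * m) = 1)
include hz1 hz2 hz3 hz4 hz5

omit hz1 hz4 in
/-- For `m ≤ 1` the prescribed values of `z` clash at the index `2 m`. -/
theorem two_le : 2 ≤ m := by
  by_contra! hm
  interval_cases m <;> simp_all

theorem eq_potential_sub {k : ℕ} (hk : 1 ≤ k) (hkm : k ≤ 2 * m) :
    z k = potential m (k + 1) - potential m k := by
  have hm := two_le hz2 hz3 hz5
  unfold potential
  rcases (show k + 1 ≤ m ∨ k = m ∨ k = m + 1 ∨ (m + 2 ≤ k ∧ k + 1 ≤ 2 * m) ∨ k = 2 * m by omega)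
    with hk' | rfl | rfl | ⟨hk', hk''⟩ | rfl
  · rw [hz1 k hk hk']; split_ifs <;> omega
  · rw [hz2]; split_ifs <;> omega
  · rw [hz3]; split_ifs <;> omega
  · rw [hz4 k hk' hk'']; split_ifs <;> omega
  · rw [hz5]; split_ifs <;> omega

theorem sum_window {h j : ℕ} (hh : 1 ≤ h) (hj : 1 ≤ j) (hjh : j + h ≤ 2 * m + 1) :
    ∑ k ∈ Icc j (j + h - 1), z k = potential m (j + h) - potential m j := by
  rw [sum_Icc_eq_sub_of_eq_sub (by omega) fun k hk ↦
    eq_potential_sub hz1 hz2 hz3 hz4 hz5 (by grind) (by grind), Nat.sub_add_cancel (by omega)]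

end Vector

end TwoEqualParts

open TwoEqualParts in
theorem stmt_12_general (m : ℕ) (z : ℕ → ℤ)
    (hz1 : ∀ i, 1 ≤ i → i + 1 ≤ m → z i = 2)
    (hz2 : z m = 0)
    (hz3 : z (m + 1) = 3)
    (hz4 : ∀ i, m + 2 ≤ i → i + 1 ≤ 2*m → z i = 2)
    (hz5 : z (2*m) = 1)
    (I : ℕ → ℕ)
    (hI : ∀ h, I h = if h ≤ m then m + 1 - h else 2*m + 1 - h) :
    z m = 0
    ∧ (∀ i, 1 ≤ i → i ≤ 2*m → i ≠ m → 0 < z i)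
    ∧ (∀ h j, 1 ≤ h → h ≤ 2*m → 1 ≤ j → j ≤ 2*m + 1 - h → j ≠ I h →
        (∑ k ∈ Finset.Icc (I h) (I h + h - 1), z k)
          < ∑ k ∈ Finset.Icc j (j + h - 1), z k) := by
  obtain rfl : I = windowStart m := funext hI
  refine ⟨hz2, fun i hi hi2m him ↦ ?_, fun h j hh hh2m hj hjh hjs ↦ ?_⟩
  · rw [eq_potential_sub hz1 hz2 hz3 hz4 hz5 hi hi2m]
    unfold potential
    split_ifs <;> omega
  · have hs : 1 ≤ windowStart m h ∧ windowStart m h + h ≤ 2 * m + 1 := by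
      unfold windowStart; split_ifs <;> omega
    rw [sum_window hz1 hz2 hz3 hz4 hz5 hh hs.1 hs.2, sum_window hz1 hz2 hz3 hz4 hz5 hh hj (by omega),
      potential_windowStart hh hh2m]
    exact lt_potential_window hh hj (by omega) hjs

/-- For the two-equal-parts partition `μ = (m, m)` of `n = 2m`, where `i(h) = m+1−h` for
`h ≤ m` and `i(h) = 2m+1−h` for `h > m`, the vector
`z = (2, …, 2, 0, 3, 2, …, 2, 1)` solves the system `(IE_μ)`. -/
theorem stmt_12 (m : ℕ) (hm : 1 ≤ m) (z : ℕ → ℤ)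
    (hz1 : ∀ i, 1 ≤ i → i + 1 ≤ m → z i = 2)
    (hz2 : z m = 0)
    (hz3 : z (m + 1) = 3)
    (hz4 : ∀ i, m + 2 ≤ i → i + 1 ≤ 2*m → z i = 2)
    (hz5 : z (2*m) = 1)
    (I : ℕ → ℕ)
    (hI : ∀ h, I h = if h ≤ m then m + 1 - h else 2*m + 1 - h) :
    z m = 0
    ∧ (∀ i, 1 ≤ i → i ≤ 2*m → i ≠ m → 0 < z i)
    ∧ (∀ h j, 1 ≤ h → h ≤ 2*m → 1 ≤ j → j ≤ 2*m + 1 - h → j ≠ I h →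
        (∑ k ∈ Finset.Icc (I h) (I h + h - 1), z k)
          < ∑ k ∈ Finset.Icc j (j + h - 1), z k) :=
  stmt_12_general m z hz1 hz2 hz3 hz4 hz5 I hI
end

section
/- Let μ be a partition of n, let i(h) (1 ≤ h ≤ n) be as in (IE_μ), and let z = (z₁,…,zₙ) ∈ ℤⁿ be a solution of (IE_μ) all of whose entries are divisible by n+1. Define w_j := (Σ_{k=j}^{n}(n+1−k)z_k − Σ_{k=1}^{j−1} k·z_k)/(n+1) for 1 ≤ j ≤ n+1. Then each w_j is an integer, Σ_{j=1}^{n+1} w_j = 0, and w_j − w_{j+h} = Σ_{k=j}^{j+h−1} z_k for all valid j, h. Moreover, letting Λ = Σ_{i=1}^{n} E_{i,i+1} ∈ M_{n+1}(ℂ) and D(t) = diag(t^{w₁},…,t^{w_{n+1}}) for t ≠ 0, for every h ∈ {1,…,n} the matrix t^{−Σ_{k=i(h)}^{i(h)+h−1} z_k} · D(t)·Λ^h·D(t)⁻¹ converges to the matrix unit E_{i(h), i(h)+h} as t → 0 with t ≠ 0. -/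
/-!
Writing `N_j` for the numerator `wNum n z j`, one has `N_j - N_{j+1} = (n+1) z_j`, so
`w_j - w_{j+h}` telescopes to the window sum `z_j + ⋯ + z_{j+h-1}`, and swapping the double
sums shows `Σ_j N_j = 0`. Conjugating the shift `Λ^h` by `D(t)` multiplies its `(a, a+h)` entry
by `t^{w_a - w_{a+h}}`. By `(IE_μ)` the window starting at `i(h)` strictly minimises the window
sums, so after rescaling by `t^{-S}`, with `S` that minimum, all exponents are nonnegative and
only the one at `a = i(h)` vanishes.
-/

/-- `i(h) = μ₁ + 1 − (h − Σ_{i>k} μ_i)` (for the appropriate `k`). -/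
def iIdx (l : ℕ) (μ : ℕ → ℕ) (h k : ℕ) : ℕ :=
  μ 1 + 1 - (h - ∑ i ∈ Finset.Icc (k+1) l, μ i)

/-- The numerator `Σ_{k=j}^{n}(n+1−k)z_k − Σ_{k=1}^{j−1} k·z_k` of `w_j`. -/
def wNum (n : ℕ) (z : ℕ → ℤ) (j : ℕ) : ℤ :=
  (∑ k ∈ Finset.Icc j n, ((n : ℤ) + 1 - (k : ℤ)) * z k)
    - ∑ k ∈ Finset.Icc 1 (j-1), (k : ℤ) * z k

open Finset Filter Topology Matrix

section Weights

variable {n : ℕ} {z : ℕ → ℤ}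

theorem dvd_wNum (hdvd : ∀ i, 1 ≤ i → i ≤ n → ((n : ℤ) + 1) ∣ z i) {j : ℕ} (hj : 1 ≤ j)
    (hjn : j ≤ n + 1) : ((n : ℤ) + 1) ∣ wNum n z j := by
  refine dvd_sub (dvd_sum fun k hk => dvd_mul_of_dvd_right ?_ _)
    (dvd_sum fun k hk => dvd_mul_of_dvd_right ?_ _) <;>
  · rw [mem_Icc] at hk
    exact hdvd k (by omega) (by omega)

theorem sum_wNum_eq_zero : ∑ j ∈ Icc 1 (n + 1), wNum n z j = 0 := by
  have hfirst : ∑ j ∈ Icc 1 (n + 1), ∑ k ∈ Icc j n, ((n : ℤ) + 1 - k) * z k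
      = ∑ k ∈ Icc 1 n, ∑ _j ∈ Icc 1 k, ((n : ℤ) + 1 - k) * z k :=
    sum_comm' fun _ _ => by simp only [mem_Icc]; omega
  have hsecond : ∑ j ∈ Icc 1 (n + 1), ∑ k ∈ Icc 1 (j - 1), (k : ℤ) * z k
      = ∑ k ∈ Icc 1 n, ∑ _j ∈ Icc (k + 1) (n + 1), (k : ℤ) * z k :=
    sum_comm' fun _ _ => by simp only [mem_Icc]; omega
  unfold wNum
  rw [sum_sub_distrib, hfirst, hsecond, ← sum_sub_distrib]
  refine sum_eq_zero fun k hk => ?_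
  rw [mem_Icc] at hk
  simp only [sum_const, Nat.card_Icc, nsmul_eq_mul]
  push_cast [show k ≤ n + 1 by omega]
  ring

theorem wNum_sub_wNum_succ {j : ℕ} (hj : 1 ≤ j) (hjn : j ≤ n) :
    wNum n z j - wNum n z (j + 1) = ((n : ℤ) + 1) * z j := by
  have htop : Icc j n = insert j (Icc (j + 1) n) := by
    ext x; simp only [mem_Icc, mem_insert]; omega
  have hbot : Icc 1 (j + 1 - 1) = insert j (Icc 1 (j - 1)) := by
    ext x; simp only [mem_Icc, mem_insert]; omega
  rw [wNum, wNum, htop, hbot, sum_insert (by simp), sum_insert (by simp; omega)]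
  ring

theorem wNum_sub_wNum_add {j : ℕ} (hj : 1 ≤ j) :
    ∀ {h : ℕ}, j + h ≤ n + 1 →
      wNum n z j - wNum n z (j + h) = ((n : ℤ) + 1) * ∑ k ∈ Ico j (j + h), z k
  | 0, _ => by simp
  | h + 1, hjh => by
    rw [← add_assoc, sum_Ico_succ_top (by omega), mul_add, ← wNum_sub_wNum_add hj (by omega),
      ← wNum_sub_wNum_succ (by omega) (by omega)]
    ring

theorem wNum_div_sub_wNum_div (hdvd : ∀ i, 1 ≤ i → i ≤ n → ((n : ℤ) + 1) ∣ z i)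
    {j h : ℕ} (hj : 1 ≤ j) (hh : 1 ≤ h) (hjh : j + h ≤ n + 1) :
    wNum n z j / ((n : ℤ) + 1) - wNum n z (j + h) / ((n : ℤ) + 1)
      = ∑ k ∈ Icc j (j + h - 1), z k := by
  have hIcc : Icc j (j + h - 1) = Ico j (j + h) := by ext x; simp only [mem_Icc, mem_Ico]; omega
  rw [← Int.sub_ediv_of_dvd _ (dvd_wNum hdvd (by omega) hjh), wNum_sub_wNum_add hj hjh, hIcc,
    Int.mul_ediv_cancel_left _ (by positivity)]

end Weights

section ShiftMatrix

theorem shift_pow_apply {R : Type*} [Semiring R] {m : ℕ} (Λ : Matrix (Fin m) (Fin m) R)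
    (hΛ : ∀ a b : Fin m, Λ a b = if (b : ℕ) = a + 1 then 1 else 0) (h : ℕ) (a b : Fin m) :
    (Λ ^ h) a b = if (b : ℕ) = a + h then 1 else 0 := by
  induction h generalizing b with
  | zero => simp [one_apply, Fin.ext_iff, eq_comm]
  | succ h ih =>
    rw [pow_succ, mul_apply]
    simp only [ih, hΛ, mul_ite, mul_one, mul_zero]
    by_cases hb : (b : ℕ) = a + (h + 1)
    · rw [Fintype.sum_eq_single ⟨a + h, by omega⟩ fun c hc => ?_]
      · simp [hb, ← add_assoc]
      · have : (c : ℕ) ≠ a + h := fun hc' => hc (Fin.ext hc')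
        simp [this]
    · rw [if_neg hb]
      refine sum_eq_zero fun c _ => ?_
      split_ifs <;> first | rfl | omega

theorem diagonal_mul_mul_inv_diagonal_apply {ι K : Type*} [Fintype ι] [DecidableEq ι] [Field K]
    {d : ι → K} (hd : ∀ i, d i ≠ 0) (M : Matrix ι ι K) (a b : ι) :
    (diagonal d * M * (diagonal d)⁻¹) a b = d a * M a b * (d b)⁻¹ := by
  have hinv : (diagonal d)⁻¹ = diagonal fun i => (d i)⁻¹ :=
    inv_eq_right_inv (by simp [diagonal_mul_diagonal, hd])
  rw [hinv, mul_diagonal, diagonal_mul]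

theorem tendsto_zpow_nhdsNE_zero {𝕜 : Type*} [NormedField 𝕜] {e : ℤ} (he : 0 ≤ e) :
    Tendsto (fun t : 𝕜 => t ^ e) (𝓝[≠] 0) (𝓝 (if e = 0 then 1 else 0)) := by
  split_ifs with he0
  · simp only [he0, zpow_zero]
    exact tendsto_const_nhds
  · have hcont := continuousAt_zpow₀ (0 : 𝕜) e (Or.inr he)
    rw [ContinuousAt, _root_.zero_zpow e he0] at hcont
    exact hcont.mono_left nhdsWithin_le_nhds

theorem tendsto_zpow_smul_diagonal_conj_shift_pow {𝕜 : Type*} [NormedField 𝕜] {m : ℕ}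
    (Λ : Matrix (Fin m) (Fin m) 𝕜)
    (hΛ : ∀ a b : Fin m, Λ a b = if (b : ℕ) = a + 1 then 1 else 0) (v : Fin m → ℤ) (h : ℕ)
    (S : ℤ) (hv : ∀ a b : Fin m, (b : ℕ) = a + h → S ≤ v a - v b) :
    Tendsto (fun t : 𝕜 => t ^ (-S) •
        (diagonal (fun a => t ^ v a) * Λ ^ h * (diagonal (fun a => t ^ v a))⁻¹))
      (𝓝[≠] 0) (𝓝 (of fun a b => if (b : ℕ) = a + h ∧ v a - v b = S then 1 else 0)) := by
  have hentry : ∀ t : 𝕜, t ≠ 0 → ∀ a b : Fin m,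
      (t ^ (-S) • (diagonal (fun a => t ^ v a) * Λ ^ h * (diagonal (fun a => t ^ v a))⁻¹)) a b
        = if (b : ℕ) = a + h then t ^ (v a - v b - S) else 0 := by
    intro t ht a b
    rw [Matrix.smul_apply, diagonal_mul_mul_inv_diagonal_apply (fun _ => zpow_ne_zero _ ht),
      shift_pow_apply Λ hΛ]
    split_ifs
    · rw [smul_eq_mul, mul_one, ← _root_.zpow_neg, ← zpow_add₀ ht, ← zpow_add₀ ht]
      ring_nf
    · simp
  refine tendsto_pi_nhds.2 fun a => tendsto_pi_nhds.2 fun b => ?_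
  refine Tendsto.congr' (eventually_nhdsWithin_of_forall fun t ht => (hentry t ht a b).symm) ?_
  simp only [of_apply]
  by_cases hb : (b : ℕ) = a + h
  · have hexp : v a - v b = S ↔ v a - v b - S = 0 := by omega
    simp only [hb, true_and, if_true, hexp]
    exact tendsto_zpow_nhdsNE_zero (by linarith [hv a b hb])
  · simp only [hb, false_and, if_false]
    exact tendsto_const_nhds

end ShiftMatrix

theorem stmt_13_general (n l : ℕ) (μ : ℕ → ℕ)
    (z : ℕ → ℤ)
    (hzmin : ∀ h k, 1 ≤ h → h ≤ n → 1 ≤ k → k ≤ l →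
      (∑ i ∈ Finset.Icc (k+1) l, μ i) < h → h ≤ ∑ i ∈ Finset.Icc k l, μ i →
      ∀ j, 1 ≤ j → j ≤ n + 1 - h → j ≠ iIdx l μ h k →
        (∑ t ∈ Finset.Icc (iIdx l μ h k) (iIdx l μ h k + h - 1), z t)
          < ∑ t ∈ Finset.Icc j (j + h - 1), z t)
    (hdvd : ∀ i, 1 ≤ i → i ≤ n → ((n : ℤ) + 1) ∣ z i)
    (w : ℕ → ℤ)
    (hw : ∀ j, w j = wNum n z j / ((n : ℤ) + 1))
    (Λ : Matrix (Fin (n+1)) (Fin (n+1)) ℂ)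
    (hΛ : ∀ i j : Fin (n+1), Λ i j = if (j : ℕ) = (i : ℕ) + 1 then 1 else 0) :
    (∀ j, 1 ≤ j → j ≤ n + 1 → ((n : ℤ) + 1) ∣ wNum n z j)
    ∧ (∑ j ∈ Finset.Icc 1 (n+1), w j = 0)
    ∧ (∀ j h, 1 ≤ j → 1 ≤ h → j + h ≤ n + 1 →
        w j - w (j + h) = ∑ k ∈ Finset.Icc j (j + h - 1), z k)
    ∧ (∀ h k, 1 ≤ h → h ≤ n → 1 ≤ k → k ≤ l →
        (∑ i ∈ Finset.Icc (k+1) l, μ i) < h → h ≤ ∑ i ∈ Finset.Icc k l, μ i →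
        Filter.Tendsto
          (fun t : ℂ =>
            t ^ (-(∑ q ∈ Finset.Icc (iIdx l μ h k) (iIdx l μ h k + h - 1), z q)) •
              (Matrix.diagonal (fun a : Fin (n+1) => t ^ (w ((a : ℕ) + 1))) *
                Λ ^ h *
                (Matrix.diagonal (fun a : Fin (n+1) => t ^ (w ((a : ℕ) + 1))))⁻¹))
          (nhdsWithin 0 {0}ᶜ)
          (nhds (Matrix.of fun a b : Fin (n+1) =>
            if (a : ℕ) + 1 = iIdx l μ h k ∧ (b : ℕ) + 1 = iIdx l μ h k + h
            then 1 else 0))) := by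
  have hdiff : ∀ j h, 1 ≤ j → 1 ≤ h → j + h ≤ n + 1 →
      w j - w (j + h) = ∑ k ∈ Icc j (j + h - 1), z k := fun j h hj hh hjh => by
    rw [hw, hw]
    exact wNum_div_sub_wNum_div hdvd hj hh hjh
  refine ⟨fun j => dvd_wNum hdvd, ?_, hdiff, ?_⟩
  · simp only [hw]
    rw [← Int.sum_div fun j hj => dvd_wNum hdvd (mem_Icc.1 hj).1 (mem_Icc.1 hj).2,
      sum_wNum_eq_zero, Int.zero_ediv]
  intro h k hh hhn hk hkl hlt hle
  set i := iIdx l μ h k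
  have hwindow : ∀ a b : Fin (n + 1), (b : ℕ) = a + h →
      w (a + 1) - w (b + 1) = ∑ q ∈ Icc ((a : ℕ) + 1) (a + 1 + h - 1), z q := fun a b hb => by
    rw [show (b : ℕ) + 1 = a + 1 + h by omega]
    exact hdiff _ _ (by omega) hh (by omega)
  have hstrict : ∀ a b : Fin (n + 1), (b : ℕ) = a + h → (a : ℕ) + 1 ≠ i →
      ∑ q ∈ Icc i (i + h - 1), z q < w (a + 1) - w (b + 1) := fun a b hb hai => by
    rw [hwindow a b hb]
    exact hzmin h k hh hhn hk hkl hlt hle _ (by omega) (by omega) hai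
  have hlim := tendsto_zpow_smul_diagonal_conj_shift_pow Λ hΛ (fun a => w (a + 1)) h
    (∑ q ∈ Icc i (i + h - 1), z q) fun a b hb => by
      rcases eq_or_ne ((a : ℕ) + 1) i with hai | hai
      · rw [hwindow a b hb, hai]
      · exact (hstrict a b hb hai).le
  convert hlim using 3
  funext a b
  refine if_congr ⟨fun ⟨hai, hbi⟩ => ⟨by omega, by rw [hwindow a b (by omega), hai]⟩,
    fun ⟨hb, hS⟩ => ?_⟩ rfl rfl
  by_contra hne
  have hai : (a : ℕ) + 1 ≠ i := fun hai => hne ⟨hai, by omega⟩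
  exact (hstrict a b hb hai).ne' hS

/-- Given a solution `z` of `(IE_μ)` with all entries divisible by `n+1`, the vector `w`
with `w_j = (Σ_{k=j}^n (n+1−k)z_k − Σ_{k=1}^{j−1} k z_k)/(n+1)` is integral, sums to `0`,
satisfies `w_j − w_{j+h} = z_j(h)`, and conjugating `Λ^h` by `diag(t^{w₁},…,t^{w_{n+1}})`
and renormalizing by `t^{−z_{i(h)}(h)}` converges to the matrix unit `E_{i(h), i(h)+h}`
as `t → 0`, `t ≠ 0`. -/
theorem stmt_13 (n l : ℕ) (hn : 1 ≤ n) (hl : 1 ≤ l) (μ : ℕ → ℕ)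
    (hpos : ∀ k, 1 ≤ k → k ≤ l → 1 ≤ μ k)
    (hmono : ∀ k k', 1 ≤ k → k ≤ k' → k' ≤ l → μ k' ≤ μ k)
    (hsum : ∑ k ∈ Finset.Icc 1 l, μ k = n)
    (z : ℕ → ℤ)
    (hz0 : z (μ 1) = 0)
    (hzpos : ∀ i, 1 ≤ i → i ≤ n → i ≠ μ 1 → 0 < z i)
    (hzmin : ∀ h k, 1 ≤ h → h ≤ n → 1 ≤ k → k ≤ l →
      (∑ i ∈ Finset.Icc (k+1) l, μ i) < h → h ≤ ∑ i ∈ Finset.Icc k l, μ i →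
      ∀ j, 1 ≤ j → j ≤ n + 1 - h → j ≠ iIdx l μ h k →
        (∑ t ∈ Finset.Icc (iIdx l μ h k) (iIdx l μ h k + h - 1), z t)
          < ∑ t ∈ Finset.Icc j (j + h - 1), z t)
    (hdvd : ∀ i, 1 ≤ i → i ≤ n → ((n : ℤ) + 1) ∣ z i)
    (w : ℕ → ℤ)
    (hw : ∀ j, w j = wNum n z j / ((n : ℤ) + 1))
    (Λ : Matrix (Fin (n+1)) (Fin (n+1)) ℂ)
    (hΛ : ∀ i j : Fin (n+1), Λ i j = if (j : ℕ) = (i : ℕ) + 1 then 1 else 0) :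
    (∀ j, 1 ≤ j → j ≤ n + 1 → ((n : ℤ) + 1) ∣ wNum n z j)
    ∧ (∑ j ∈ Finset.Icc 1 (n+1), w j = 0)
    ∧ (∀ j h, 1 ≤ j → 1 ≤ h → j + h ≤ n + 1 →
        w j - w (j + h) = ∑ k ∈ Finset.Icc j (j + h - 1), z k)
    ∧ (∀ h k, 1 ≤ h → h ≤ n → 1 ≤ k → k ≤ l →
        (∑ i ∈ Finset.Icc (k+1) l, μ i) < h → h ≤ ∑ i ∈ Finset.Icc k l, μ i →
        Filter.Tendsto
          (fun t : ℂ =>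
            t ^ (-(∑ q ∈ Finset.Icc (iIdx l μ h k) (iIdx l μ h k + h - 1), z q)) •
              (Matrix.diagonal (fun a : Fin (n+1) => t ^ (w ((a : ℕ) + 1))) *
                Λ ^ h *
                (Matrix.diagonal (fun a : Fin (n+1) => t ^ (w ((a : ℕ) + 1))))⁻¹))
          (nhdsWithin 0 {0}ᶜ)
          (nhds (Matrix.of fun a b : Fin (n+1) =>
            if (a : ℕ) + 1 = iIdx l μ h k ∧ (b : ℕ) + 1 = iIdx l μ h k + h
            then 1 else 0))) :=
  stmt_13_general n l μ z hzmin hdvd w hw Λ hΛ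
end

section
/- Let n ≥ 2 and let ε₁,…,εₙ be the standard basis of ℤⁿ. Let Δ⁺ = {ε_i : 1 ≤ i ≤ n} ∪ {ε_i − ε_j : i < j} ∪ {ε_i + ε_j : i < j} (the positive roots of type Bₙ) and Δ = Δ⁺ ∪ (−Δ⁺). Suppose S ⊆ Δ⁺ is a set with exactly n elements such that (i) for all α ∈ S and β ∈ Δ⁺ with α + β ∈ Δ one has α + β ∈ S, and (ii) for all α, β ∈ S, α + β ∉ Δ. Then either every element of S is of the form ε_i + ε_j with i < j, or S = {ε₁} ∪ {ε₁ + ε_j : 2 ≤ j ≤ n}. -/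
/-!
If some root of `S` is not of the form `ε_i + ε_j`, then `S` contains a short root `ε_i`
(if it contains `ε_i - ε_j`, add `ε_j`). Adding `ε_1 - ε_i` moves it up to `ε_1 ∈ S`, and adding
`ε_j` then gives `ε_1 + ε_j ∈ S` for every `j ≥ 2`. These are already `n` distinct roots, so they
exhaust `S`.
-/

def posRootsB (ι : Type*) [LinearOrder ι] : Set (ι → ℤ) :=
  {v | ∃ i, v = Pi.single i 1}
    ∪ {v | ∃ i j, i < j ∧ v = Pi.single i 1 - Pi.single j 1}
    ∪ {v | ∃ i j, i < j ∧ v = Pi.single i 1 + Pi.single j 1}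

def rootsB (ι : Type*) [LinearOrder ι] : Set (ι → ℤ) :=
  posRootsB ι ∪ {v | -v ∈ posRootsB ι}

def IsBorelIdealB {ι : Type*} [LinearOrder ι] (S : Set (ι → ℤ)) : Prop :=
  ∀ α ∈ S, ∀ β ∈ posRootsB ι, α + β ∈ rootsB ι → α + β ∈ S

namespace posRootsB

variable {ι : Type*} [LinearOrder ι]

theorem single_mem (i : ι) : Pi.single i 1 ∈ posRootsB ι :=
  Or.inl (Or.inl ⟨i, rfl⟩)

theorem single_sub_single_mem {i j : ι} (h : i < j) :
    Pi.single i 1 - Pi.single j 1 ∈ posRootsB ι :=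
  Or.inl (Or.inr ⟨i, j, h, rfl⟩)

theorem single_add_single_mem {i j : ι} (h : i < j) :
    Pi.single i 1 + Pi.single j 1 ∈ posRootsB ι :=
  Or.inr ⟨i, j, h, rfl⟩

theorem subset_rootsB : posRootsB ι ⊆ rootsB ι :=
  Set.subset_union_left

end posRootsB

namespace IsBorelIdealB

open posRootsB

variable {ι : Type*} [LinearOrder ι] {S : Set (ι → ℤ)}

theorem exists_single_mem (hS : IsBorelIdealB S) (hSsub : S ⊆ posRootsB ι)
    {α : ι → ℤ} (hαS : α ∈ S) (hα : ∀ i j, i < j → α ≠ Pi.single i 1 + Pi.single j 1) :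
    ∃ i, Pi.single i 1 ∈ S := by
  rcases hSsub hαS with (⟨i, rfl⟩ | ⟨i, j, hij, rfl⟩) | ⟨i, j, hij, rfl⟩
  · exact ⟨i, hαS⟩
  · have hsum : Pi.single i 1 - Pi.single j 1 + Pi.single j 1 = (Pi.single i 1 : ι → ℤ) :=
      sub_add_cancel _ _
    refine ⟨i, hsum ▸ hS _ hαS _ (single_mem j) ?_⟩
    rw [hsum]
    exact subset_rootsB (single_mem i)
  · exact absurd rfl (hα i j hij)

theorem single_mem_of_lt (hS : IsBorelIdealB S) {i k : ι} (hi : Pi.single i 1 ∈ S)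
    (hki : k < i) : Pi.single k 1 ∈ S := by
  have hsum : Pi.single i 1 + (Pi.single k 1 - Pi.single i 1) = (Pi.single k 1 : ι → ℤ) :=
    add_sub_cancel _ _
  refine hsum ▸ hS _ hi _ (single_sub_single_mem hki) ?_
  rw [hsum]
  exact subset_rootsB (single_mem k)

theorem single_add_single_mem (hS : IsBorelIdealB S) {i j : ι} (hi : Pi.single i 1 ∈ S)
    (hij : i < j) : Pi.single i 1 + Pi.single j 1 ∈ S :=
  hS _ hi _ (single_mem j) (subset_rootsB (posRootsB.single_add_single_mem hij))

end IsBorelIdealB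

namespace Finset

variable {ι : Type*} [Fintype ι] [DecidableEq ι]

theorem card_insert_single_image_add_single (z : ι) :
    (insert (Pi.single z 1) ((univ.erase z).image
      fun j => Pi.single z 1 + Pi.single j 1) : Finset (ι → ℤ)).card = Fintype.card ι := by
  have hinj : Function.Injective fun j : ι => (Pi.single z 1 + Pi.single j 1 : ι → ℤ) :=
    fun a b hab => by simpa [Pi.single_apply] using congrFun (add_left_cancel hab) a
  have hnotin : Pi.single z 1 ∉ (univ.erase z).image
      fun j => (Pi.single z 1 + Pi.single j 1 : ι → ℤ) := by
    simp
  rw [card_insert_of_notMem hnotin, card_image_of_injective _ hinj,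
    card_erase_of_mem (mem_univ z), card_univ]
  have := Fintype.card_pos_iff.2 ⟨z⟩
  omega

theorem eq_insert_single_image_add_single {S : Finset (ι → ℤ)}
    (hcard : S.card = Fintype.card ι) {z : ι} (hz : Pi.single z 1 ∈ S)
    (hzj : ∀ j ≠ z, Pi.single z 1 + Pi.single j 1 ∈ S) :
    S = insert (Pi.single z 1) ((univ.erase z).image fun j => Pi.single z 1 + Pi.single j 1) := by
  refine (eq_of_subset_of_card_le ?_ ?_).symm
  · refine insert_subset hz fun v hv => ?_
    obtain ⟨j, hj, rfl⟩ := mem_image.1 hv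
    exact hzj j (ne_of_mem_erase hj)
  · rw [hcard, card_insert_single_image_add_single]

end Finset

/-- Classification of the root sets of `n`-dimensional abelian ideals of a Borel
subalgebra in type `Bₙ`: such a set `S` either consists entirely of roots
`ε_i + ε_j` (`i < j`), or equals `{ε₁} ∪ {ε₁ + ε_j : 2 ≤ j ≤ n}`. -/
theorem stmt_14 (n : ℕ) (hn : 2 ≤ n)
    (e : Fin n → (Fin n → ℤ)) (he : ∀ i, e i = Pi.single i 1)
    (Δp : Set (Fin n → ℤ))
    (hΔp : Δp = {v | ∃ i : Fin n, v = e i}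
        ∪ {v | ∃ i j : Fin n, i < j ∧ v = e i - e j}
        ∪ {v | ∃ i j : Fin n, i < j ∧ v = e i + e j})
    (Δ : Set (Fin n → ℤ)) (hΔ : Δ = Δp ∪ {v | -v ∈ Δp})
    (S : Finset (Fin n → ℤ)) (hcard : S.card = n)
    (hSsub : ↑S ⊆ Δp)
    (hideal : ∀ α ∈ S, ∀ β ∈ Δp, α + β ∈ Δ → α + β ∈ S) :
    (∀ α ∈ S, ∃ i j : Fin n, i < j ∧ α = e i + e j)
    ∨ (↑S : Set (Fin n → ℤ)) =
        {e ⟨0, by omega⟩} ∪ {v | ∃ j : Fin n, 1 ≤ (j : ℕ) ∧ v = e ⟨0, by omega⟩ + e j} := by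
  obtain rfl : e = fun i => Pi.single i 1 := funext he
  subst hΔp hΔ
  have hS : IsBorelIdealB (S : Set (Fin n → ℤ)) := hideal
  refine or_iff_not_imp_left.2 fun hlong => ?_
  push Not at hlong
  obtain ⟨α, hαS, hα⟩ := hlong
  obtain ⟨i, hi⟩ := hS.exists_single_mem hSsub hαS hα
  set z : Fin n := ⟨0, by omega⟩
  have hz : Pi.single z 1 ∈ S := by
    rcases (show z ≤ i from Nat.zero_le _).eq_or_lt with rfl | hzi
    · exact hi
    · exact hS.single_mem_of_lt hi hzi
  have hzj : ∀ j ≠ z, Pi.single z 1 + Pi.single j 1 ∈ S := fun j hj =>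
    hS.single_add_single_mem hz (lt_of_le_of_ne (Nat.zero_le _) hj.symm)
  rw [Finset.eq_insert_single_image_add_single (hcard.trans (Fintype.card_fin n).symm) hz hzj]
  ext v
  simp [z, Fin.ext_iff, Nat.one_le_iff_ne_zero, eq_comm]
end

section
/- Let n ≥ 2 and let ε₁,…,εₙ be the standard basis of ℤⁿ. Let Δ⁺ = {2ε_i : 1 ≤ i ≤ n} ∪ {ε_i − ε_j : i < j} ∪ {ε_i + ε_j : i < j} (the positive roots of type Cₙ) and Δ = Δ⁺ ∪ (−Δ⁺). Suppose S ⊆ Δ⁺ is a set with exactly n elements such that (i) for all α ∈ S and β ∈ Δ⁺ with α + β ∈ Δ one has α + β ∈ S, and (ii) for all α, β ∈ S, α + β ∉ Δ. Then every element of S is of the form ε_i + ε_j with i ≤ j (that is, of the form ε_i + ε_j with i < j or 2ε_i). -/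
/-! If `ε_i - ε_j` (with `i < j`) lay in `S`, the ideal property would force
`(ε_i - ε_j) + 2ε_j = ε_i + ε_j` into `S`, and then `(ε_i - ε_j) + (ε_i + ε_j) = 2ε_i` would be
a root, contradicting commutativity. -/

theorem notMem_of_add_mem_of_add_add_mem {M : Type*} [Add M] {S Δp Δ : Set M}
    (hideal : ∀ α ∈ S, ∀ β ∈ Δp, α + β ∈ Δ → α + β ∈ S)
    (habel : ∀ α ∈ S, ∀ β ∈ S, α + β ∉ Δ) {α β : M} (hβ : β ∈ Δp) (hαβ : α + β ∈ Δ)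
    (hααβ : α + (α + β) ∈ Δ) : α ∉ S :=
  fun hα => habel α hα _ (hideal α hα β hβ hαβ) hααβ

theorem stmt_15_general (n : ℕ)
    (e : Fin n → (Fin n → ℤ))
    (Δp : Set (Fin n → ℤ))
    (hΔp : Δp = {v | ∃ i : Fin n, v = e i + e i}
        ∪ {v | ∃ i j : Fin n, i < j ∧ v = e i - e j}
        ∪ {v | ∃ i j : Fin n, i < j ∧ v = e i + e j})
    (Δ : Set (Fin n → ℤ)) (hΔ : Δ = Δp ∪ {v | -v ∈ Δp})
    (S : Finset (Fin n → ℤ))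
    (hSsub : ↑S ⊆ Δp)
    (hideal : ∀ α ∈ S, ∀ β ∈ Δp, α + β ∈ Δ → α + β ∈ S)
    (habel : ∀ α ∈ S, ∀ β ∈ S, α + β ∉ Δ) :
    ∀ α ∈ S, ∃ i j : Fin n, i ≤ j ∧ α = e i + e j := by
  subst hΔp hΔ
  intro α hα
  obtain (⟨i, rfl⟩ | ⟨i, j, hij, rfl⟩) | ⟨i, j, hij, rfl⟩ := hSsub hα
  · exact ⟨i, i, le_rfl, rfl⟩
  · refine absurd hα (notMem_of_add_mem_of_add_add_mem (S := ↑S) hideal habel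
      (β := e j + e j) (.inl (.inl ⟨j, rfl⟩)) ?_ ?_)
    · exact .inl (.inr ⟨i, j, hij, by abel⟩)
    · exact .inl (.inl (.inl ⟨i, by abel⟩))
  · exact ⟨i, j, hij.le, rfl⟩

/-- Classification of the root sets of `n`-dimensional abelian ideals of a Borel
subalgebra in type `Cₙ`: such a set `S` consists entirely of roots `ε_i + ε_j` with
`i ≤ j` (i.e. `ε_i + ε_j` with `i < j`, or `2ε_i`). -/
theorem stmt_15 (n : ℕ) (hn : 2 ≤ n)
    (e : Fin n → (Fin n → ℤ)) (he : ∀ i, e i = Pi.single i 1)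
    (Δp : Set (Fin n → ℤ))
    (hΔp : Δp = {v | ∃ i : Fin n, v = e i + e i}
        ∪ {v | ∃ i j : Fin n, i < j ∧ v = e i - e j}
        ∪ {v | ∃ i j : Fin n, i < j ∧ v = e i + e j})
    (Δ : Set (Fin n → ℤ)) (hΔ : Δ = Δp ∪ {v | -v ∈ Δp})
    (S : Finset (Fin n → ℤ)) (hcard : S.card = n)
    (hSsub : ↑S ⊆ Δp)
    (hideal : ∀ α ∈ S, ∀ β ∈ Δp, α + β ∈ Δ → α + β ∈ S)
    (habel : ∀ α ∈ S, ∀ β ∈ S, α + β ∉ Δ) :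
    ∀ α ∈ S, ∃ i j : Fin n, i ≤ j ∧ α = e i + e j :=
  stmt_15_general n e Δp hΔp Δ hΔ S hSsub hideal habel
end

section
/- Let n ≥ 4 and let ε₁,…,εₙ be the standard basis of ℤⁿ. Let Δ⁺ = {ε_i − ε_j : i < j} ∪ {ε_i + ε_j : i < j} (the positive roots of type Dₙ) and Δ = Δ⁺ ∪ (−Δ⁺). Suppose S ⊆ Δ⁺ is a set with exactly n elements such that (i) for all α ∈ S and β ∈ Δ⁺ with α + β ∈ Δ one has α + β ∈ S, and (ii) for all α, β ∈ S, α + β ∉ Δ. Then one of the following holds: every element of S is of the form ε_i + ε_j with i < j; or S = {ε₁ − εₙ} ∪ {ε₁ + ε_j : 2 ≤ j ≤ n}; or S = {ε₂ + ε₃, ε₁ − εₙ} ∪ {ε₁ + ε_j : 2 ≤ j ≤ n−1}. -/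
/-!
If `S` contains a difference root `ε a - ε b`, adding positive roots moves it to the lowest
difference `ε ⊥ - ε ⊤` and from there to every `ε ⊥ + ε c` with `c ≠ ⊥, ⊤`. These `n - 1` roots
(`fan ⊥ ⊤`) lie in `S`, so exactly one root `x` of `S` lies outside them, and no root reachable
from `x` may lie outside them too. For a difference `x ≠ ε ⊥ - ε ⊤` a forbidden step always exists
(this is where `n ≥ 4` enters). For `x = ε i + ε j` the forbidden steps leave nothing strictly
between `⊥` and `i`, or between `i` and `j`, unless `j = ⊤`; then `i = ⊥`, since otherwise
`(ε ⊥ - ε ⊤) + (ε i + ε ⊤)` would be a root.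
-/

open Finset

namespace TypeD

variable {ι : Type*}

section Basis

variable [DecidableEq ι]

def ε (i : ι) : ι → ℤ := Pi.single i 1

lemma ε_apply (i k : ι) : ε i k = if k = i then 1 else 0 := Pi.single_apply i 1 k

lemma ε_injective : Function.Injective (ε : ι → ι → ℤ) := by
  intro i j h
  by_contra hij
  simpa [ε_apply, hij] using congrFun h i

variable {a b c d : ι}

lemma ε_sub_ε_ne_ε_add_ε (hab : a ≠ b) (c d : ι) : ε a - ε b ≠ ε c + ε d := by
  intro h
  have := congrFun h b
  simp only [Pi.sub_apply, Pi.add_apply, ε_apply, if_neg hab.symm, if_true] at this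
  split_ifs at this <;> omega

lemma ε_add_ε_ne_ε_add_ε (hac : a ≠ c) (had : a ≠ d) (b : ι) : ε a + ε b ≠ ε c + ε d := by
  intro h
  have := congrFun h a
  simp only [Pi.add_apply, ε_apply, if_neg hac, if_neg had, if_true] at this
  split_ifs at this <;> omega

lemma eq_and_eq_of_ε_sub_ε_eq (hab : a ≠ b) (h : ε a - ε b = ε c - ε d) : a = c ∧ b = d := by
  have hac : a = c := by
    by_contra hac
    have := congrFun h a
    simp only [Pi.sub_apply, ε_apply, if_neg hab, if_neg hac, if_true] at this
    split_ifs at this <;> omega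
  subst hac
  exact ⟨rfl, ε_injective (sub_right_injective h)⟩

end Basis

section Roots

variable [LinearOrder ι]

variable (ι) in
def posRoots : Set (ι → ℤ) :=
  {v | ∃ i j : ι, i < j ∧ v = ε i - ε j} ∪ {v | ∃ i j : ι, i < j ∧ v = ε i + ε j}

variable (ι) in
def roots : Set (ι → ℤ) := posRoots ι ∪ {v | -v ∈ posRoots ι}

def IsIdealRootSet (S : Finset (ι → ℤ)) : Prop :=
  ∀ α ∈ S, ∀ β ∈ posRoots ι, α + β ∈ roots ι → α + β ∈ S

def IsAbelianRootSet (S : Finset (ι → ℤ)) : Prop :=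
  ∀ α ∈ S, ∀ β ∈ S, α + β ∉ roots ι

variable {a b c : ι}

lemma ε_sub_ε_mem_posRoots (h : a < b) : ε a - ε b ∈ posRoots ι := Or.inl ⟨a, b, h, rfl⟩

lemma ε_add_ε_mem_posRoots (h : a ≠ b) : ε a + ε b ∈ posRoots ι := by
  rcases h.lt_or_gt with h | h
  · exact Or.inr ⟨a, b, h, rfl⟩
  · exact Or.inr ⟨b, a, h, add_comm _ _⟩

lemma posRoots_subset_roots : posRoots ι ⊆ roots ι := Set.subset_union_left

namespace IsIdealRootSet

variable {S : Finset (ι → ℤ)}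

lemma add_mem (hS : IsIdealRootSet S) {α β γ : ι → ℤ} (hα : α ∈ S) (hβ : β ∈ posRoots ι)
    (hγ : γ ∈ posRoots ι) (h : α + β = γ) : γ ∈ S :=
  h ▸ hS α hα β hβ (h ▸ posRoots_subset_roots hγ)

lemma ε_sub_ε_mem_of_le (hS : IsIdealRootSet S) {a' b' : ι} (h : ε a - ε b ∈ S) (hab : a < b)
    (ha : a' ≤ a) (hb : b ≤ b') : ε a' - ε b' ∈ S := by
  have h' : ε a' - ε b ∈ S := by
    rcases ha.eq_or_lt with rfl | ha
    · exact h
    · exact hS.add_mem h (ε_sub_ε_mem_posRoots ha) (ε_sub_ε_mem_posRoots (ha.trans hab))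
        (by abel)
  rcases hb.eq_or_lt with rfl | hb
  · exact h'
  · exact hS.add_mem h' (ε_sub_ε_mem_posRoots hb)
      (ε_sub_ε_mem_posRoots ((ha.trans_lt hab).trans hb)) (by abel)

lemma ε_add_ε_mem_of_ε_sub_ε_mem (hS : IsIdealRootSet S) (h : ε a - ε b ∈ S) (hca : c ≠ a)
    (hcb : c ≠ b) : ε a + ε c ∈ S :=
  hS.add_mem h (ε_add_ε_mem_posRoots hcb.symm) (ε_add_ε_mem_posRoots hca.symm) (by abel)

end IsIdealRootSet

section Fan

variable [Fintype ι] {z w : ι}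

/-- For `z = ⊥` and `w = ⊤` this is the root set of the smallest ideal containing `ε ⊥ - ε ⊤`. -/
def fan (z w : ι) : Finset (ι → ℤ) :=
  insert (ε z - ε w) (((univ.erase z).erase w).image (ε z + ε ·))

lemma mem_fan {v : ι → ℤ} :
    v ∈ fan z w ↔ v = ε z - ε w ∨ ∃ c, c ≠ z ∧ c ≠ w ∧ v = ε z + ε c := by
  simp only [fan, mem_insert, mem_image, mem_erase, mem_univ, and_true]
  grind

lemma card_fan (hzw : z ≠ w) : #(fan z w) + 1 = Fintype.card ι := by
  have hsub : ε z - ε w ∉ ((univ.erase z).erase w).image (ε z + ε ·) := by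
    simp only [mem_image, not_exists, not_and]
    exact fun c _ h => ε_sub_ε_ne_ε_add_ε hzw z c h.symm
  have hinj : Function.Injective (ε z + ε · : ι → ι → ℤ) :=
    (add_right_injective _).comp ε_injective
  rw [fan, card_insert_of_notMem hsub, card_image_of_injective _ hinj,
    card_erase_of_mem (mem_erase.2 ⟨hzw.symm, mem_univ w⟩), card_erase_of_mem (mem_univ z),
    card_univ]
  have := Fintype.one_lt_card_iff.2 ⟨z, w, hzw⟩
  omega

lemma ε_add_ε_notMem_fan (hzw : z ≠ w) (ha : a ≠ z) (hb : b ≠ z) : ε a + ε b ∉ fan z w := by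
  rw [mem_fan]
  rintro (h | ⟨c, -, -, h⟩)
  · exact ε_sub_ε_ne_ε_add_ε hzw a b h.symm
  · exact ε_add_ε_ne_ε_add_ε ha.symm hb.symm c h.symm

lemma ε_add_ε_right_notMem_fan (hzw : z ≠ w) (a : ι) : ε a + ε w ∉ fan z w := by
  rw [mem_fan]
  rintro (h | ⟨c, -, hcw, h⟩)
  · exact ε_sub_ε_ne_ε_add_ε hzw a w h.symm
  · rw [add_comm] at h
    exact ε_add_ε_ne_ε_add_ε hzw.symm hcw.symm a h

lemma IsIdealRootSet.fan_subset {S : Finset (ι → ℤ)} (hS : IsIdealRootSet S)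
    (h : ε z - ε w ∈ S) : fan z w ⊆ S := by
  intro v hv
  rcases mem_fan.1 hv with rfl | ⟨c, hcz, hcw, rfl⟩
  · exact h
  · exact hS.ε_add_ε_mem_of_ε_sub_ε_mem h hcz hcw

lemma eq_of_mem_sdiff_fan {S : Finset (ι → ℤ)} (hzw : z ≠ w) (hfan : fan z w ⊆ S)
    (hcard : #S = Fintype.card ι) {x y : ι → ℤ} (hx : x ∈ S \ fan z w)
    (hy : y ∈ S \ fan z w) : x = y :=
  card_le_one.1 (by rw [card_sdiff_of_subset hfan]; have := card_fan hzw; omega) x hx y hy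

end Fan

section Bounded

variable [BoundedOrder ι] [Fintype ι] {S : Finset (ι → ℤ)}

lemma IsIdealRootSet.fan_subset_of_ε_sub_ε_mem (hS : IsIdealRootSet S) (h : ε a - ε b ∈ S)
    (hab : a < b) : fan ⊥ ⊤ ⊆ S :=
  hS.fan_subset (hS.ε_sub_ε_mem_of_le h hab bot_le le_top)

theorem IsIdealRootSet.eq_bot_top_of_ε_sub_ε_mem (h4 : 4 ≤ Fintype.card ι)
    (hS : IsIdealRootSet S) (hcard : #S = Fintype.card ι) (h : ε a - ε b ∈ S) (hab : a < b) :
    a = ⊥ ∧ b = ⊤ := by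
  have hbt : (⊥ : ι) ≠ ⊤ := (bot_le.trans_lt hab).ne_top
  have hfan := hS.fan_subset_of_ε_sub_ε_mem h hab
  by_contra hne
  have hx : ε a - ε b ∈ S \ fan ⊥ ⊤ := by
    refine mem_sdiff.2 ⟨h, ?_⟩
    rw [mem_fan]
    rintro (h' | ⟨c, -, -, h'⟩)
    · exact hne (eq_and_eq_of_ε_sub_ε_eq hab.ne h')
    · exact ε_sub_ε_ne_ε_add_ε hab.ne _ _ h'
  obtain ⟨y, hy, hyx⟩ : ∃ y ∈ S \ fan ⊥ ⊤, y ≠ ε a - ε b := by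
    by_cases hb : b = ⊤
    · subst hb
      have ha : a ≠ ⊥ := fun ha => hne ⟨ha, rfl⟩
      have h3 : #({⊥, a, ⊤} : Finset ι) < #(univ : Finset ι) := by
        have : #({⊥, a, ⊤} : Finset ι) ≤ 3 := card_le_three
        rw [card_univ]
        omega
      obtain ⟨c, -, hc⟩ := exists_mem_notMem_of_card_lt_card h3
      simp only [mem_insert, mem_singleton, not_or] at hc
      exact ⟨ε a + ε c, mem_sdiff.2 ⟨hS.ε_add_ε_mem_of_ε_sub_ε_mem h hc.2.1 hc.2.2,
        ε_add_ε_notMem_fan hbt ha hc.1⟩, (ε_sub_ε_ne_ε_add_ε hab.ne _ _).symm⟩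
    · exact ⟨ε a + ε ⊤, mem_sdiff.2 ⟨hS.ε_add_ε_mem_of_ε_sub_ε_mem h
        hab.ne_top.symm (Ne.symm hb), ε_add_ε_right_notMem_fan hbt a⟩,
        (ε_sub_ε_ne_ε_add_ε hab.ne _ _).symm⟩
  exact hyx (eq_of_mem_sdiff_fan hbt hfan hcard hy hx)

lemma IsIdealRootSet.exists_eq_ε_add_ε_of_mem_sdiff_fan (h4 : 4 ≤ Fintype.card ι)
    (hS : IsIdealRootSet S) (hSΔ : ↑S ⊆ posRoots ι) (hcard : #S = Fintype.card ι)
    {x : ι → ℤ} (hx : x ∈ S \ fan ⊥ ⊤) : ∃ i j, i < j ∧ x = ε i + ε j := by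
  obtain ⟨hxS, hxfan⟩ := mem_sdiff.1 hx
  rcases hSΔ hxS with ⟨i, j, hij, rfl⟩ | hsum
  · obtain ⟨rfl, rfl⟩ := hS.eq_bot_top_of_ε_sub_ε_mem h4 hcard hxS hij
    exact absurd (mem_fan.2 (Or.inl rfl)) hxfan
  · exact hsum

theorem IsIdealRootSet.eq_bot_top_or_covBy_of_mem_sdiff_fan (hS : IsIdealRootSet S)
    (habel : IsAbelianRootSet S) (hcard : #S = Fintype.card ι) (hfan : fan ⊥ ⊤ ⊆ S)
    (hij : a < b) (hx : ε a + ε b ∈ S \ fan ⊥ ⊤) : (a = ⊥ ∧ b = ⊤) ∨ (⊥ ⋖ a ∧ a ⋖ b) := by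
  have hbt : (⊥ : ι) ≠ ⊤ := (bot_le.trans_lt hij).ne_top
  obtain ⟨hxS, hxfan⟩ := mem_sdiff.1 hx
  by_cases hb : b = ⊤
  · subst hb
    refine Or.inl ⟨?_, rfl⟩
    by_contra ha
    have hroot : ε ⊥ - ε ⊤ ∈ S := hfan (mem_fan.2 (Or.inl rfl))
    refine habel _ hroot _ hxS (posRoots_subset_roots ?_)
    convert ε_add_ε_mem_posRoots (Ne.symm ha) using 1
    abel
  have ha : a ≠ ⊥ := by
    rintro rfl
    exact hxfan (mem_fan.2 (Or.inr ⟨b, hij.ne_bot, hb, rfl⟩))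
  have hunique : ∀ c d, c ≠ ⊥ → d ≠ ⊥ → ε c + ε d ∈ S → ε c + ε d = ε a + ε b :=
    fun c d hc hd h =>
      eq_of_mem_sdiff_fan hbt hfan hcard (mem_sdiff.2 ⟨h, ε_add_ε_notMem_fan hbt hc hd⟩) hx
  refine Or.inr ⟨⟨bot_lt_iff_ne_bot.2 ha, fun c hc hca => ?_⟩, ⟨hij, fun c hac hcb => ?_⟩⟩
  · have := hunique c b hc.ne' hij.ne_bot (hS.add_mem hxS
      (ε_sub_ε_mem_posRoots hca) (ε_add_ε_mem_posRoots (hca.trans hij).ne) (by abel))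
    exact hca.ne (ε_injective (add_right_cancel this))
  · have := hunique a c ha hac.ne_bot (hS.add_mem hxS
      (ε_sub_ε_mem_posRoots hcb) (ε_add_ε_mem_posRoots hac.ne) (by abel))
    exact hcb.ne (ε_injective (add_left_cancel this))

theorem IsIdealRootSet.classification (h4 : 4 ≤ Fintype.card ι) (hSΔ : ↑S ⊆ posRoots ι)
    (hS : IsIdealRootSet S) (habel : IsAbelianRootSet S) (hcard : #S = Fintype.card ι) :
    (∀ α ∈ S, ∃ i j, i < j ∧ α = ε i + ε j) ∨ S = insert (ε ⊥ + ε ⊤) (fan ⊥ ⊤) ∨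
      ∃ i j, ⊥ ⋖ i ∧ i ⋖ j ∧ S = insert (ε i + ε j) (fan ⊥ ⊤) := by
  refine or_iff_not_imp_left.2 fun hsum => ?_
  push Not at hsum
  obtain ⟨α, hαS, hα⟩ := hsum
  obtain ⟨a, b, hab, rfl⟩ : ∃ a b, a < b ∧ α = ε a - ε b :=
    (hSΔ hαS).resolve_right fun ⟨i, j, hij, h⟩ => hα i j hij h
  have hbt : (⊥ : ι) ≠ ⊤ := (bot_le.trans_lt hab).ne_top
  have hfan := hS.fan_subset_of_ε_sub_ε_mem hαS hab
  have hcard_fan := card_fan hbt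
  obtain ⟨x, hxS, hxfan⟩ := exists_mem_notMem_of_card_lt_card (s := fan ⊥ ⊤) (t := S) (by omega)
  have hSx : S = insert x (fan ⊥ ⊤) :=
    (eq_of_subset_of_card_le (insert_subset hxS hfan)
      (by rw [card_insert_of_notMem hxfan]; omega)).symm
  have hx : x ∈ S \ fan ⊥ ⊤ := mem_sdiff.2 ⟨hxS, hxfan⟩
  obtain ⟨i, j, hij, rfl⟩ := hS.exists_eq_ε_add_ε_of_mem_sdiff_fan h4 hSΔ hcard hx
  rcases hS.eq_bot_top_or_covBy_of_mem_sdiff_fan habel hcard hfan hij hx with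
    ⟨rfl, rfl⟩ | ⟨hi, hj⟩
  · exact Or.inl hSx
  · exact Or.inr ⟨i, j, hi, hj, hSx⟩

end Bounded

end Roots

end TypeD

open TypeD

/-- Classification of the root sets of `n`-dimensional abelian ideals of a Borel
subalgebra in type `Dₙ` (`n ≥ 4`): such a set `S` either consists entirely of roots
`ε_i + ε_j` (`i < j`), or equals `{ε₁ − εₙ} ∪ {ε₁ + ε_j : 2 ≤ j ≤ n}`, or equals
`{ε₂ + ε₃, ε₁ − εₙ} ∪ {ε₁ + ε_j : 2 ≤ j ≤ n−1}`. -/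
theorem stmt_16 (n : ℕ) (hn : 4 ≤ n)
    (e : Fin n → (Fin n → ℤ)) (he : ∀ i, e i = Pi.single i 1)
    (Δp : Set (Fin n → ℤ))
    (hΔp : Δp = {v | ∃ i j : Fin n, i < j ∧ v = e i - e j}
        ∪ {v | ∃ i j : Fin n, i < j ∧ v = e i + e j})
    (Δ : Set (Fin n → ℤ)) (hΔ : Δ = Δp ∪ {v | -v ∈ Δp})
    (S : Finset (Fin n → ℤ)) (hcard : S.card = n)
    (hSsub : ↑S ⊆ Δp)
    (hideal : ∀ α ∈ S, ∀ β ∈ Δp, α + β ∈ Δ → α + β ∈ S)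
    (habel : ∀ α ∈ S, ∀ β ∈ S, α + β ∉ Δ) :
    (∀ α ∈ S, ∃ i j : Fin n, i < j ∧ α = e i + e j)
    ∨ (↑S : Set (Fin n → ℤ)) =
        {e ⟨0, by omega⟩ - e ⟨n-1, by omega⟩}
          ∪ {v | ∃ j : Fin n, 1 ≤ (j : ℕ) ∧ v = e ⟨0, by omega⟩ + e j}
    ∨ (↑S : Set (Fin n → ℤ)) =
        ({e ⟨1, by omega⟩ + e ⟨2, by omega⟩,
          e ⟨0, by omega⟩ - e ⟨n-1, by omega⟩} : Set (Fin n → ℤ))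
          ∪ {v | ∃ j : Fin n, 1 ≤ (j : ℕ) ∧ (j : ℕ) ≤ n - 2 ∧
              v = e ⟨0, by omega⟩ + e j} := by
  obtain rfl : e = ε := funext he
  subst hΔp hΔ
  have : NeZero n := ⟨by omega⟩
  have hbot : (⟨0, by omega⟩ : Fin n) = ⊥ := rfl
  have htop : (⟨n - 1, by omega⟩ : Fin n) = ⊤ := Fin.ext (Fin.val_top n).symm
  have hne_bot (j : Fin n) : 1 ≤ (j : ℕ) ↔ j ≠ ⊥ := by
    rw [Ne, Fin.ext_iff, bot_eq_zero, Fin.val_zero]; omega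
  have hne_top (j : Fin n) : (j : ℕ) ≤ n - 2 ↔ j ≠ ⊤ := by
    rw [Ne, Fin.ext_iff, Fin.val_top]; omega
  rcases IsIdealRootSet.classification (by simpa using hn) hSsub hideal habel
      (by simpa using hcard) with h | rfl | ⟨i, j, hi, hj, rfl⟩
  · exact Or.inl h
  · refine Or.inr (Or.inl ?_)
    ext v
    simp only [coe_insert, Set.mem_insert_iff, mem_coe, mem_fan, hbot, htop, hne_bot,
      Set.singleton_union, Set.mem_ofPred_eq]
    grind
  · rw [Fin.covBy_iff, Nat.covBy_iff_add_one_eq, bot_eq_zero, Fin.val_zero] at hi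
    rw [Fin.covBy_iff, Nat.covBy_iff_add_one_eq] at hj
    have h1 : (⟨1, by omega⟩ : Fin n) = i := Fin.ext hi
    have h2 : (⟨2, by omega⟩ : Fin n) = j := Fin.ext (show 2 = (j : ℕ) by omega)
    refine Or.inr (Or.inr ?_)
    ext v
    simp [mem_fan, hbot, htop, hne_bot, hne_top, h1, h2, or_assoc]
end

section
/- Let n ≥ 2 and let ε₁,…,εₙ be the standard basis of ℤⁿ. Let Δ⁺ = {ε_i : 1 ≤ i ≤ n} ∪ {ε_i − ε_j : i < j} ∪ {ε_i + ε_j : i < j} (the positive roots of type Bₙ) and Δ = Δ⁺ ∪ (−Δ⁺). Suppose S ⊆ {ε_i + ε_j : 1 ≤ i < j ≤ n} is a set such that for all α ∈ S and β ∈ Δ⁺ with α + β ∈ Δ one has α + β ∈ S. Call α ∈ S a source if there exist no β ∈ S and γ ∈ Δ⁺ with α = β + γ. Then, for α = ε_i + ε_j ∈ S (i < j), α is a source if and only if neither ε_{i+1} + ε_j nor ε_i + ε_{j+1} belongs to S (where ε_i + ε_{j+1} is understood not to belong to S when j = n). -/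
/-!
Write `ε i + ε j` as the pair `(i, j)`. Adding the positive root `ε c - ε a` with `c < a`
lowers one index, so a set closed under addition of positive roots is a down-set of pairs
for the product order. Conversely, comparing coordinates shows that if
`ε i + ε j = (ε a + ε b) + γ` with `γ` a positive root, then `γ = ε c - ε d` with `c < d` and
`{a, b}` arises from `{i, j}` by raising one index, so `(i, j) < (a, b)`. Such a pair `(a, b)`
lies above `(i + 1, j)` or above `(i, j + 1)`, whence the characterization of sources.
-/

local notation "ε" i:max => (Pi.single i (1 : ℤ) : Fin _ → ℤ)

namespace TypeB

variable {n : ℕ} {S : Set (Fin n → ℤ)}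

def posRoots (n : ℕ) : Set (Fin n → ℤ) :=
  {v | ∃ i : Fin n, v = ε i}
    ∪ {v | ∃ i j : Fin n, i < j ∧ v = ε i - ε j}
    ∪ {v | ∃ i j : Fin n, i < j ∧ v = ε i + ε j}

def roots (n : ℕ) : Set (Fin n → ℤ) := posRoots n ∪ {v | -v ∈ posRoots n}

/-- The root set of an ideal of the Borel subalgebra. -/
def IsIdeal (S : Set (Fin n → ℤ)) : Prop :=
  ∀ α ∈ S, ∀ β ∈ posRoots n, α + β ∈ roots n → α + β ∈ S

def IsSource (S : Set (Fin n → ℤ)) (α : Fin n → ℤ) : Prop :=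
  ¬ ∃ β ∈ S, ∃ γ ∈ posRoots n, α = β + γ

lemma single_sub_single_mem_posRoots {i j : Fin n} (h : i < j) : ε i - ε j ∈ posRoots n :=
  Or.inl (Or.inr ⟨i, j, h, rfl⟩)

lemma single_add_single_mem_posRoots {i j : Fin n} (h : i ≠ j) : ε i + ε j ∈ posRoots n := by
  rcases h.lt_or_gt with h | h
  · exact Or.inr ⟨i, j, h, rfl⟩
  · exact Or.inr ⟨j, i, h, add_comm _ _⟩

lemma IsIdeal.single_add_single_mem_of_le (hS : IsIdeal S)
    {a b c : Fin n} (h : ε a + ε b ∈ S) (hca : c ≤ a) (hcb : c ≠ b) : ε c + ε b ∈ S := by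
  rcases hca.eq_or_lt with rfl | hca
  · exact h
  have hsum : ε a + ε b + (ε c - ε a) = ε c + ε b := by abel
  rw [← hsum]
  refine hS _ h _ (single_sub_single_mem_posRoots hca) (Or.inl ?_)
  rw [hsum]
  exact single_add_single_mem_posRoots hcb

lemma IsIdeal.single_add_single_mem_of_le_of_le (hS : IsIdeal S)
    {a b c d : Fin n} (h : ε a + ε b ∈ S) (hca : c ≤ a) (hdb : d ≤ b) (hcd : c < d) :
    ε c + ε d ∈ S := by
  have hmem : ε b + ε c ∈ S :=
    add_comm (ε c) (ε b) ▸ hS.single_add_single_mem_of_le h hca (hcd.trans_le hdb).ne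
  exact add_comm (ε d) (ε c) ▸ hS.single_add_single_mem_of_le hmem hdb hcd.ne'

-- Coordinatewise, `h` says that the multisets `{i, j, d}` and `{a, b, c}` agree.
lemma lt_of_single_add_single_add_single_eq {i j a b c d : Fin n} (hij : i < j) (hab : a < b)
    (hcd : c < d) (h : ε i + ε j + ε d = ε a + ε b + ε c) : (i, j) < (a, b) := by
  have count (x : Fin n) : (if x = i then 1 else 0) + (if x = j then 1 else 0)
      + (if x = d then 1 else 0)
      = (if x = a then 1 else 0) + (if x = b then 1 else 0) + (if x = c then (1 : ℤ) else 0) := by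
    simpa [Pi.single_apply] using congrFun h x
  have hi := count i
  have hj := count j
  have hc := count c
  have hd := count d
  rw [Prod.mk_lt_mk]
  grind

lemma lt_of_eq_add_posRoot {i j a b : Fin n} {γ : Fin n → ℤ} (hij : i < j) (hab : a < b)
    (hγ : γ ∈ posRoots n) (h : ε i + ε j = ε a + ε b + γ) : (i, j) < (a, b) := by
  -- Coordinate sums (`2` against `3` or `4`) leave only `γ = ε c - ε d`.
  have hsum := congrArg (fun v : Fin n → ℤ => ∑ x, v x) h
  rcases hγ with (⟨c, rfl⟩ | ⟨c, d, hcd, rfl⟩) | ⟨c, d, -, rfl⟩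
  · simp [Finset.sum_add_distrib] at hsum
  · exact lt_of_single_add_single_add_single_eq hij hab hcd (by rw [h]; abel)
  · simp [Finset.sum_add_distrib] at hsum

lemma IsIdeal.isSource_iff (hS : IsIdeal S)
    (hSsub : S ⊆ {v | ∃ i j : Fin n, i < j ∧ v = ε i + ε j}) {i j : Fin n} (hij : i < j) :
    IsSource S (ε i + ε j) ↔
      (∀ i' : Fin n, (i' : ℕ) = i + 1 → ε i' + ε j ∉ S) ∧
        (∀ j' : Fin n, (j' : ℕ) = j + 1 → ε i + ε j' ∉ S) := by
  constructor
  · intro hsrc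
    constructor
    · intro i' hi' hmem
      exact hsrc ⟨_, hmem, ε i - ε i',
        single_sub_single_mem_posRoots (Fin.lt_def.2 (by omega)), by abel⟩
    · intro j' hj' hmem
      exact hsrc ⟨_, hmem, ε j - ε j',
        single_sub_single_mem_posRoots (Fin.lt_def.2 (by omega)), by abel⟩
  · rintro ⟨hleft, hright⟩ ⟨_, hβ, γ, hγ, heq⟩
    obtain ⟨a, b, hab, rfl⟩ := hSsub hβ
    have hdom : (i : ℕ) ≤ a ∧ (j : ℕ) < b ∨ (i : ℕ) + 1 < j ∧ (i : ℕ) < a ∧ (j : ℕ) ≤ b := by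
      have := Prod.mk_lt_mk.1 (lt_of_eq_add_posRoot hij hab hγ heq)
      simp only [Fin.lt_def, Fin.le_def] at this hab hij
      omega
    rcases hdom with ⟨hia, hjb⟩ | ⟨hij', hia, hjb⟩
    · exact hright ⟨j + 1, by omega⟩ rfl <| hS.single_add_single_mem_of_le_of_le hβ
        (Fin.le_def.2 hia) (Fin.le_def.2 hjb) (Nat.lt_succ_of_lt hij)
    · exact hleft ⟨i + 1, by omega⟩ rfl <| hS.single_add_single_mem_of_le_of_le hβ
        (Fin.le_def.2 hia) (Fin.le_def.2 hjb) (Fin.lt_def.2 hij')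

end TypeB

theorem stmt_17_general (n : ℕ)
    (e : Fin n → (Fin n → ℤ)) (he : ∀ i, e i = Pi.single i 1)
    (Δp : Set (Fin n → ℤ))
    (hΔp : Δp = {v | ∃ i : Fin n, v = e i}
        ∪ {v | ∃ i j : Fin n, i < j ∧ v = e i - e j}
        ∪ {v | ∃ i j : Fin n, i < j ∧ v = e i + e j})
    (Δ : Set (Fin n → ℤ)) (hΔ : Δ = Δp ∪ {v | -v ∈ Δp})
    (S : Set (Fin n → ℤ))
    (hSsub : S ⊆ {v | ∃ i j : Fin n, i < j ∧ v = e i + e j})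
    (hideal : ∀ α ∈ S, ∀ β ∈ Δp, α + β ∈ Δ → α + β ∈ S) :
    ∀ i j : Fin n, i < j → e i + e j ∈ S →
      ((¬ ∃ β ∈ S, ∃ γ ∈ Δp, e i + e j = β + γ) ↔
        ((∀ i' : Fin n, (i' : ℕ) = (i : ℕ) + 1 → e i' + e j ∉ S)
          ∧ (∀ j' : Fin n, (j' : ℕ) = (j : ℕ) + 1 → e i + e j' ∉ S))) := by
  obtain rfl : e = fun i => Pi.single i 1 := funext he
  subst hΔp hΔ
  intro i j hij _
  exact TypeB.IsIdeal.isSource_iff hideal hSsub hij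

/-- Characterization of sources (Proposition `prop:source`, type `Bₙ`): for a set `S`
of roots of the form `ε_i + ε_j` (`i < j`) closed under addition of positive roots,
a root `ε_i + ε_j ∈ S` is a source (i.e. not of the form `β + γ` with `β ∈ S`,
`γ ∈ Δ⁺`) if and only if neither `ε_{i+1} + ε_j` nor `ε_i + ε_{j+1}` belongs to `S`. -/
theorem stmt_17 (n : ℕ) (hn : 2 ≤ n)
    (e : Fin n → (Fin n → ℤ)) (he : ∀ i, e i = Pi.single i 1)
    (Δp : Set (Fin n → ℤ))
    (hΔp : Δp = {v | ∃ i : Fin n, v = e i}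
        ∪ {v | ∃ i j : Fin n, i < j ∧ v = e i - e j}
        ∪ {v | ∃ i j : Fin n, i < j ∧ v = e i + e j})
    (Δ : Set (Fin n → ℤ)) (hΔ : Δ = Δp ∪ {v | -v ∈ Δp})
    (S : Set (Fin n → ℤ))
    (hSsub : S ⊆ {v | ∃ i j : Fin n, i < j ∧ v = e i + e j})
    (hideal : ∀ α ∈ S, ∀ β ∈ Δp, α + β ∈ Δ → α + β ∈ S) :
    ∀ i j : Fin n, i < j → e i + e j ∈ S →
      ((¬ ∃ β ∈ S, ∃ γ ∈ Δp, e i + e j = β + γ) ↔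
        ((∀ i' : Fin n, (i' : ℕ) = (i : ℕ) + 1 → e i' + e j ∉ S)
          ∧ (∀ j' : Fin n, (j' : ℕ) = (j : ℕ) + 1 → e i + e j' ∉ S))) :=
  stmt_17_general n e he Δp hΔp Δ hΔ S hSsub hideal
end
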